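/- arXiv:2110.10754 — 13 statements merged into one kernel-verified Lean document; each statement's English description precedes it below -/
import Mathlib

section
/- Let G = (V, E) be a finite simple graph and let x̂ be an LP-optimal point of the vertex-cover LP of G. Then there exists a minimum-cardinality vertex cover C of G that agrees with x̂ on all integer coordinates: for every v ∈ V with x̂_v = 1 we have v ∈ C, and for every v ∈ V with x̂_v = 0 we have v ∉ C. (Nemhauser–Trotter persistency, Fact 3.) -/
def LPFeasible {V : Type*} [Fintype V] (G : SimpleGraph V) (x : V → ℝ) : Prop :=
  (∀ v, 0 ≤ x v ∧ x v ≤ 1) ∧ ∀ u v, G.Adj u v → 1 ≤ x u + x v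

noncomputable def LPValue {V : Type*} [Fintype V] (x : V → ℝ) : ℝ := ∑ v, x v

def LPOptimal {V : Type*} [Fintype V] (G : SimpleGraph V) (x : V → ℝ) : Prop :=
  LPFeasible G x ∧ ∀ y : V → ℝ, LPFeasible G y → LPValue x ≤ LPValue y

def HalfIntegral {V : Type*} (x : V → ℝ) : Prop :=
  ∀ v, x v = 0 ∨ x v = 1/2 ∨ x v = 1

def IsVertexCover {V : Type*} [Fintype V] (G : SimpleGraph V) (C : Finset V) : Prop :=
  ∀ u v, G.Adj u v → u ∈ C ∨ v ∈ C

/-!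
Take a minimum vertex cover `D` and let `V₀`, `V₁` be the vertices where `x̂` is `0`, resp. `1`.
The set `C = (D \ V₀) ∪ V₁` is again a vertex cover, since a neighbour of a vertex of `V₀` lies
in `V₁`. It is no larger than `D` because `|V₁ \ D| ≤ |D ∩ V₀|`: otherwise, lowering `x̂` by a
small `ε` on `V₁ \ D` and raising it by `ε` on `D ∩ V₀` keeps it LP-feasible (every neighbour of
`V₁ \ D` lies in `D`) and strictly decreases the LP value.
-/

open Finset

theorem Finset.card_sdiff_union_add_card_inter_le {α : Type*} [DecidableEq α] {D Z O : Finset α}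
    (hOZ : Disjoint O Z) : #((D \ Z) ∪ O) + #(D ∩ Z) ≤ #D + #(O \ D) := by
  have hsplit : (D \ Z) ∪ O = (D \ Z) ∪ (O \ D) := by
    ext v
    have : v ∈ O → v ∉ Z := fun h => disjoint_left.mp hOZ h
    simp only [mem_union, mem_sdiff]
    tauto
  rw [hsplit]
  have := card_union_le (D \ Z) (O \ D)
  have := card_inter_add_card_sdiff D Z
  omega

theorem exists_pos_le_one_forall_le_of_pos {ι : Type*} [Fintype ι] (x : ι → ℝ) :
    ∃ ε, 0 < ε ∧ ε ≤ 1 ∧ ∀ i, 0 < x i → ε ≤ x i := by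
  classical
  set T := insert 1 ((univ.filter (0 < x ·)).image x)
  have hT : T.Nonempty := insert_nonempty _ _
  refine ⟨T.min' hT, ?_, T.min'_le 1 (mem_insert_self _ _), fun i hi => T.min'_le _ ?_⟩
  · obtain h | h := mem_insert.mp (T.min'_mem hT)
    · rw [h]; exact one_pos
    · obtain ⟨i, hi, hx⟩ := mem_image.mp h
      exact hx ▸ (mem_filter.mp hi).2
  · exact mem_insert_of_mem (mem_image_of_mem _ (mem_filter.mpr ⟨mem_univ _, hi⟩))

section VertexCoverLP

variable {V : Type*} [Fintype V]

noncomputable def zeroSet (x : V → ℝ) : Finset V := univ.filter (x · = 0)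

noncomputable def oneSet (x : V → ℝ) : Finset V := univ.filter (x · = 1)

@[simp] theorem mem_zeroSet {x : V → ℝ} {v : V} : v ∈ zeroSet x ↔ x v = 0 := by
  simp [zeroSet]

@[simp] theorem mem_oneSet {x : V → ℝ} {v : V} : v ∈ oneSet x ↔ x v = 1 := by
  simp [oneSet]

theorem disjoint_oneSet_zeroSet (x : V → ℝ) : Disjoint (oneSet x) (zeroSet x) :=
  disjoint_left.mpr fun v h1 h0 => by simp_all

theorem exists_isVertexCover_forall_card_le (G : SimpleGraph V) :
    ∃ D : Finset V, IsVertexCover G D ∧ ∀ D', IsVertexCover G D' → #D ≤ #D' := by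
  classical
  obtain ⟨D, hD, hmin⟩ := exists_min_image (univ.filter (IsVertexCover G)) card
    ⟨univ, mem_filter.mpr ⟨mem_univ _, fun u _ _ => Or.inl (mem_univ u)⟩⟩
  exact ⟨D, (mem_filter.mp hD).2, fun D' hD' => hmin D' (mem_filter.mpr ⟨mem_univ _, hD'⟩)⟩

variable [DecidableEq V] {G : SimpleGraph V} {x : V → ℝ} {D : Finset V}

noncomputable def shiftBy (x : V → ℝ) (A B : Finset V) (ε : ℝ) : V → ℝ :=
  fun v => x v - (if v ∈ A then ε else 0) + (if v ∈ B then ε else 0)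

theorem lpValue_shiftBy (x : V → ℝ) (A B : Finset V) (ε : ℝ) :
    LPValue (shiftBy x A B ε) = LPValue x - #A * ε + #B * ε := by
  simp only [LPValue, shiftBy, sum_add_distrib, sum_sub_distrib, sum_ite_mem, univ_inter,
    sum_const, nsmul_eq_mul]

theorem LPFeasible.isVertexCover_sdiff_zeroSet_union_oneSet (hx : LPFeasible G x)
    (hD : IsVertexCover G D) : IsVertexCover G ((D \ zeroSet x) ∪ oneSet x) := by
  intro u v huv
  have hsum := hx.2 u v huv
  have hu := hx.1 u
  have hv := hx.1 v
  simp only [mem_union, mem_sdiff, mem_zeroSet, mem_oneSet]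
  rcases hD u v huv with hu' | hv'
  · by_cases hu0 : x u = 0
    · exact Or.inr (Or.inr (by linarith))
    · exact Or.inl (Or.inl ⟨hu', hu0⟩)
  · by_cases hv0 : x v = 0
    · exact Or.inl (Or.inr (by linarith))
    · exact Or.inr (Or.inl ⟨hv', hv0⟩)

theorem LPFeasible.shiftBy_oneSet_sdiff (hx : LPFeasible G x) (hD : IsVertexCover G D) {ε : ℝ}
    (hε0 : 0 < ε) (hε1 : ε ≤ 1) (hε : ∀ v, 0 < x v → ε ≤ x v) :
    LPFeasible G (shiftBy x (oneSet x \ D) (D ∩ zeroSet x) ε) := by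
  set y := shiftBy x (oneSet x \ D) (D ∩ zeroSet x) ε
  have hyA : ∀ v, x v = 1 → v ∉ D → y v = 1 - ε := by
    intro v h1 hvD
    simp [y, shiftBy, h1, hvD]
  have hyB : ∀ v, v ∈ D → x v = 0 → y v = ε := by
    intro v hvD h0
    simp [y, shiftBy, h0, hvD]
  have hy_ge : ∀ v, v ∉ oneSet x \ D → x v ≤ y v := by
    intro v hv
    simp only [y, shiftBy, if_neg hv, sub_zero]
    split_ifs <;> linarith
  -- the decrease on `oneSet x \ D` is paid for by the neighbours, which all lie in `D`
  have hedgeA : ∀ u v, G.Adj u v → u ∈ oneSet x \ D → 1 ≤ y u + y v := by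
    intro u v huv hu
    obtain ⟨hu1, huD⟩ := by simpa using hu
    have hvD : v ∈ D := (hD u v huv).resolve_left huD
    rw [hyA u hu1 huD]
    by_cases hv0 : x v = 0
    · rw [hyB v hvD hv0]; linarith
    · have hvpos : 0 < x v := lt_of_le_of_ne (hx.1 v).1 (Ne.symm hv0)
      have := hy_ge v (by simp [hvD])
      linarith [hε v hvpos]
  refine ⟨fun v => ?_, fun u v huv => ?_⟩
  · by_cases hA : v ∈ oneSet x \ D
    · obtain ⟨h1, hvD⟩ := by simpa using hA
      rw [hyA v h1 hvD]; constructor <;> linarith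
    · by_cases hB : v ∈ D ∩ zeroSet x
      · obtain ⟨hvD, h0⟩ := by simpa using hB
        rw [hyB v hvD h0]; constructor <;> linarith
      · simpa [y, shiftBy, hA, hB] using hx.1 v
  · by_cases hu : u ∈ oneSet x \ D
    · exact hedgeA u v huv hu
    by_cases hv : v ∈ oneSet x \ D
    · linarith [hedgeA v u huv.symm hv]
    linarith [hx.2 u v huv, hy_ge u hu, hy_ge v hv]

theorem LPOptimal.card_oneSet_sdiff_le (hx : LPOptimal G x) (hD : IsVertexCover G D) :
    #(oneSet x \ D) ≤ #(D ∩ zeroSet x) := by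
  obtain ⟨ε, hε0, hε1, hε⟩ := exists_pos_le_one_forall_le_of_pos x
  have hle := hx.2 _ (hx.1.shiftBy_oneSet_sdiff hD hε0 hε1 hε)
  rw [lpValue_shiftBy] at hle
  have hmul : (#(oneSet x \ D) : ℝ) * ε ≤ #(D ∩ zeroSet x) * ε := by linarith
  exact_mod_cast le_of_mul_le_mul_right hmul hε0

end VertexCoverLP

/-- Nemhauser–Trotter persistency: there is a minimum vertex cover agreeing with the
integer coordinates of any LP-optimal point. -/
theorem nt_persistency {V : Type*} [Fintype V] (G : SimpleGraph V) (xhat : V → ℝ)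
    (hx : LPOptimal G xhat) :
    ∃ C : Finset V, IsVertexCover G C ∧
      (∀ D : Finset V, IsVertexCover G D → C.card ≤ D.card) ∧
      (∀ v, xhat v = 1 → v ∈ C) ∧ (∀ v, xhat v = 0 → v ∉ C) := by
  classical
  obtain ⟨D, hD, hDmin⟩ := exists_isVertexCover_forall_card_le G
  refine ⟨(D \ zeroSet xhat) ∪ oneSet xhat, hx.1.isVertexCover_sdiff_zeroSet_union_oneSet hD,
    fun D' hD' => ?_, fun v hv => by simp [hv], fun v hv => by simp [hv]⟩
  have := card_sdiff_union_add_card_inter_le (D := D) (disjoint_oneSet_zeroSet xhat)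
  have := hx.card_oneSet_sdiff_le hD
  have := hDmin D' hD'
  omega
end

section
/- Let G = (V, E) be a finite simple graph and let x', y be two LP-optimal, half-integral points of the vertex-cover LP of G. Define z : V → ℝ by: z_j = 1 if x'_j = 1, or if x'_j = 1/2 and y_j = 1; z_j = 0 if x'_j = 0, or if x'_j = 1/2 and y_j = 0; and z_j = 1/2 if x'_j = y_j = 1/2. Then z is LP-feasible and ∑_{j∈V} z_j = ∑_{j∈V} x'_j; in particular z is LP-optimal. -/
section

variable {V : Type*}

open Classical in
noncomputable def replaceHalves (x y : V → ℝ) : V → ℝ :=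
  fun j => if x j = 1/2 then y j else x j

lemma eq_replaceHalves {x y z : V → ℝ} (hhx : HalfIntegral x) (hhy : HalfIntegral y)
    (hz1 : ∀ j, (x j = 1 ∨ (x j = 1/2 ∧ y j = 1)) → z j = 1)
    (hz0 : ∀ j, (x j = 0 ∨ (x j = 1/2 ∧ y j = 0)) → z j = 0)
    (hzh : ∀ j, (x j = 1/2 ∧ y j = 1/2) → z j = 1/2) :
    z = replaceHalves x y := by
  funext j
  unfold replaceHalves
  rcases hhx j with hx | hx | hx
  · simp [hx, hz0 j (Or.inl hx)]
  · rcases hhy j with hy | hy | hy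
    · simp [hx, hy, hz0 j (Or.inr ⟨hx, hy⟩)]
    · simp [hx, hy, hzh j ⟨hx, hy⟩]
    · simp [hx, hy, hz1 j (Or.inr ⟨hx, hy⟩)]
  · simp [hx, hz1 j (Or.inl hx)]

variable [Fintype V] {G : SimpleGraph V}

lemma HalfIntegral.eq_one_of_adj {x : V → ℝ} (hhx : HalfIntegral x) (hx : LPFeasible G x)
    {u v : V} (huv : G.Adj u v) (hu : x u = 1/2) (hv : x v ≠ 1/2) : x v = 1 := by
  rcases hhx v with h | h | h
  · linarith [hx.2 u v huv]
  · exact absurd h hv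
  · exact h

lemma lpFeasible_replaceHalves {x y : V → ℝ} (hx : LPFeasible G x) (hhx : HalfIntegral x)
    (hy : LPFeasible G y) : LPFeasible G (replaceHalves x y) := by
  refine ⟨fun v => ?_, fun u v huv => ?_⟩
  · simp only [replaceHalves]; split_ifs
    exacts [hy.1 v, hx.1 v]
  · have hx1 := hhx.eq_one_of_adj hx huv
    have hx2 := hhx.eq_one_of_adj hx huv.symm
    obtain ⟨hyu, -⟩ := hy.1 u
    obtain ⟨hyv, -⟩ := hy.1 v
    simp only [replaceHalves]; split_ifs with hu hv hv
    · exact hy.2 u v huv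
    · linarith [hx1 hu hv]
    · linarith [hx2 hv hu]
    · exact hx.2 u v huv

lemma lpFeasible_add_half_sub_replaceHalves {x y : V → ℝ} (hx : LPFeasible G x)
    (hhx : HalfIntegral x) (hy : LPFeasible G y) :
    LPFeasible G (fun j => x j + (y j - replaceHalves x y j) / 2) := by
  refine ⟨fun v => ?_, fun u v huv => ?_⟩
  · obtain ⟨hxv, hxv'⟩ := hx.1 v
    obtain ⟨hyv, hyv'⟩ := hy.1 v
    simp only [replaceHalves]; split_ifs <;> constructor <;> linarith
  · have hx1 := hhx.eq_one_of_adj hx huv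
    have hx2 := hhx.eq_one_of_adj hx huv.symm
    have hxe := hx.2 u v huv
    have hye := hy.2 u v huv
    obtain ⟨hyu, -⟩ := hy.1 u
    obtain ⟨hyv, -⟩ := hy.1 v
    simp only [replaceHalves]; split_ifs with hu hv hv
    · linarith
    · linarith [hx1 hu hv]
    · linarith [hx2 hv hu]
    · linarith

lemma LPValue_add_half_sub (x y w : V → ℝ) :
    LPValue (fun j => x j + (y j - w j) / 2) = LPValue x + (LPValue y - LPValue w) / 2 := by
  simp only [LPValue, Finset.sum_add_distrib, ← Finset.sum_div, Finset.sum_sub_distrib]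

lemma LPOptimal.of_value_eq {x z : V → ℝ} (hx : LPOptimal G x) (hz : LPFeasible G z)
    (h : LPValue z = LPValue x) : LPOptimal G z :=
  ⟨hz, fun _ hw => h ▸ hx.2 _ hw⟩

end

/-- Combination of two LP-optimal half-integral points (Picard–Queyranne construction). -/
theorem picard_combination {V : Type*} [Fintype V] (G : SimpleGraph V)
    (x' y z : V → ℝ)
    (hx : LPOptimal G x') (hhx : HalfIntegral x')
    (hy : LPOptimal G y) (hhy : HalfIntegral y)
    (hz1 : ∀ j, (x' j = 1 ∨ (x' j = 1/2 ∧ y j = 1)) → z j = 1)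
    (hz0 : ∀ j, (x' j = 0 ∨ (x' j = 1/2 ∧ y j = 0)) → z j = 0)
    (hzh : ∀ j, (x' j = 1/2 ∧ y j = 1/2) → z j = 1/2) :
    LPFeasible G z ∧ LPValue z = LPValue x' ∧ LPOptimal G z := by
  obtain rfl := eq_replaceHalves hhx hhy hz1 hz0 hzh
  have hz : LPFeasible G (replaceHalves x' y) := lpFeasible_replaceHalves hx.1 hhx hy.1
  have hm := hx.2 _ (lpFeasible_add_half_sub_replaceHalves hx.1 hhx hy.1)
  rw [LPValue_add_half_sub] at hm
  have hval : LPValue (replaceHalves x' y) = LPValue x' :=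
    le_antisymm (by linarith [hy.2 _ hx.1]) (hx.2 _ hz)
  exact ⟨hz, hval, hx.of_value_eq hz hval⟩
end

section
/- Let G = (V, E) be a finite simple graph and let x¹, x² be two LP-optimal, half-integral points of the vertex-cover LP of G, with integer-coordinate sets I¹ = {v ∈ V : x¹_v ∈ {0,1}} and I² = {v ∈ V : x²_v ∈ {0,1}}. Then there exists an LP-optimal half-integral point x̂ whose set of integer-valued coordinates is exactly I¹ ∪ I², i.e. {v ∈ V : x̂_v ∈ {0,1}} = I¹ ∪ I². (Fact 4.) -/
noncomputable def roundOut (s : ℝ) : ℝ :=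
  if s < 1 then 0 else if s = 1 then 1 / 2 else 1

noncomputable def roundIn (s : ℝ) : ℝ :=
  if s ≤ 0 then 0 else if 2 ≤ s then 1 else 1 / 2

lemma roundOut_mem_Icc (s : ℝ) : 0 ≤ roundOut s ∧ roundOut s ≤ 1 := by
  unfold roundOut; split_ifs <;> norm_num

lemma roundIn_mem_Icc (s : ℝ) : 0 ≤ roundIn s ∧ roundIn s ≤ 1 := by
  unfold roundIn; split_ifs <;> norm_num

lemma one_le_roundOut_add_roundOut {s t : ℝ} (h : 2 ≤ s + t) :
    1 ≤ roundOut s + roundOut t := by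
  unfold roundOut; split_ifs <;> norm_num <;> linarith

lemma one_le_roundIn_add_roundIn {s t : ℝ} (h : 2 ≤ s + t) :
    1 ≤ roundIn s + roundIn t := by
  unfold roundIn; split_ifs <;> norm_num <;> linarith

lemma roundOut_add_roundIn {a b : ℝ} (ha : a = 0 ∨ a = 1 / 2 ∨ a = 1)
    (hb : b = 0 ∨ b = 1 / 2 ∨ b = 1) : roundOut (a + b) + roundIn (a + b) = a + b := by
  rcases ha with rfl | rfl | rfl <;> rcases hb with rfl | rfl | rfl <;>
    norm_num [roundOut, roundIn]

lemma roundOut_eq_zero_or_eq_one_iff (s : ℝ) : roundOut s = 0 ∨ roundOut s = 1 ↔ s ≠ 1 := by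
  unfold roundOut; split_ifs <;> grind

lemma halfIntegral_roundOut {V : Type*} (x : V → ℝ) : HalfIntegral (fun v => roundOut (x v)) :=
  fun v => by simp only [roundOut]; split_ifs <;> norm_num

lemma add_roundOut_ne_one_iff {a b : ℝ} (ha : a = 0 ∨ a = 1 / 2 ∨ a = 1)
    (hb : b = 0 ∨ b = 1 / 2 ∨ b = 1) :
    a + roundOut (a + b) ≠ 1 ↔ (a = 0 ∨ a = 1) ∨ (b = 0 ∨ b = 1) := by
  rcases ha with rfl | rfl | rfl <;> rcases hb with rfl | rfl | rfl <;> norm_num [roundOut]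

section

variable {V : Type*} [Fintype V] {G : SimpleGraph V}

lemma LPFeasible.comp_add {x y : V → ℝ} (hx : LPFeasible G x) (hy : LPFeasible G y)
    {f : ℝ → ℝ} (hf : ∀ s, 0 ≤ f s ∧ f s ≤ 1) (hf_edge : ∀ s t, 2 ≤ s + t → 1 ≤ f s + f t) :
    LPFeasible G (fun v => f (x v + y v)) :=
  ⟨fun v => hf _, fun u v huv => hf_edge _ _ (by linarith [hx.2 u v huv, hy.2 u v huv])⟩

lemma LPOptimal.of_add_eq_add {x y x' y' : V → ℝ} (hx : LPOptimal G x) (hy : LPOptimal G y)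
    (hx' : LPFeasible G x') (hy' : LPFeasible G y') (hsum : ∀ v, x' v + y' v = x v + y v) :
    LPOptimal G x' := by
  have hval : LPValue x' + LPValue y' = LPValue x + LPValue y := by
    simp only [LPValue, ← Finset.sum_add_distrib, hsum]
  have hyx := hy.2 x hx.1
  have hxy' := hx.2 y' hy'
  exact ⟨hx', fun z hz => by linarith [hx.2 z hz]⟩

lemma LPOptimal.roundOut_add {x y : V → ℝ} (hx : LPOptimal G x) (hxh : HalfIntegral x)
    (hy : LPOptimal G y) (hyh : HalfIntegral y) :
    LPOptimal G (fun v => roundOut (x v + y v)) :=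
  hx.of_add_eq_add hy
    (hx.1.comp_add hy.1 roundOut_mem_Icc fun _ _ => one_le_roundOut_add_roundOut)
    (hx.1.comp_add hy.1 roundIn_mem_Icc fun _ _ => one_le_roundIn_add_roundIn)
    fun v => roundOut_add_roundIn (hxh v) (hyh v)

end

/-- Fact 4: there is an LP-optimal half-integral point whose integer coordinates are
exactly the union of those of two given LP-optimal half-integral points. -/
theorem max_integer_set {V : Type*} [Fintype V] (G : SimpleGraph V)
    (x1 x2 : V → ℝ) (h1 : LPOptimal G x1) (hh1 : HalfIntegral x1)
    (h2 : LPOptimal G x2) (hh2 : HalfIntegral x2) :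
    ∃ xhat : V → ℝ, LPOptimal G xhat ∧ HalfIntegral xhat ∧
      {v | xhat v = 0 ∨ xhat v = 1} =
        {v | x1 v = 0 ∨ x1 v = 1} ∪ {v | x2 v = 0 ∨ x2 v = 1} := by
  set w := fun v => roundOut (x1 v + x2 v)
  have hw : LPOptimal G w := h1.roundOut_add hh1 h2 hh2
  refine ⟨fun v => roundOut (x1 v + w v),
    h1.roundOut_add hh1 hw (halfIntegral_roundOut _), halfIntegral_roundOut _, ?_⟩
  ext v
  simp only [Set.mem_ofPred_eq, Set.mem_union, roundOut_eq_zero_or_eq_one_iff]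
  exact add_roundOut_ne_one_iff (hh1 v) (hh2 v)
end

section
/- Let G = (V, E) be a finite simple graph. Then there exists an LP-optimal point x̂ of the vertex-cover LP of G that is integral on the maximal set of integer variables: for every LP-optimal point x and every v ∈ V, if x_v ∈ {0,1} then x̂_v ∈ {0,1}. -/
set_option linter.unusedSectionVars false
set_option maxHeartbeats 1000000


open Finset

section BC
variable {V : Type*} [Fintype V]

/-- A "bicover": vertex cover of the bipartite double of `G`. -/
def IsBC (G : SimpleGraph V) (A B : Finset V) : Prop :=
  ∀ u v, G.Adj u v → u ∈ A ∨ v ∈ B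

def bcSet (G : SimpleGraph V) : Set ℕ :=
  {n | ∃ A B : Finset V, IsBC G A B ∧ A.card + B.card = n}

noncomputable def bcMin (G : SimpleGraph V) : ℕ := sInf (bcSet G)

lemma bcSet_nonempty (G : SimpleGraph V) : (bcSet G).Nonempty :=
  ⟨_, Finset.univ, Finset.univ, fun u _ _ => Or.inl (mem_univ u), rfl⟩

lemma bcMin_le {G : SimpleGraph V} {A B : Finset V} (h : IsBC G A B) :
    bcMin G ≤ A.card + B.card :=
  Nat.sInf_le ⟨A, B, h, rfl⟩

lemma exists_bcMin (G : SimpleGraph V) :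
    ∃ A B : Finset V, IsBC G A B ∧ A.card + B.card = bcMin G :=
  Nat.sInf_mem (bcSet_nonempty G)

lemma IsBC.swap {G : SimpleGraph V} {A B : Finset V} (h : IsBC G A B) : IsBC G B A :=
  fun u v huv => (h v u huv.symm).symm

lemma IsBC.meet {G : SimpleGraph V} {A B C D : Finset V} [DecidableEq V]
    (h1 : IsBC G A B) (h2 : IsBC G C D) : IsBC G (A ∩ C) (B ∪ D) := by
  intro u v huv
  rcases h1 u v huv with hA | hB
  · rcases h2 u v huv with hC | hD
    · exact Or.inl (mem_inter.2 ⟨hA, hC⟩)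
    · exact Or.inr (mem_union_right _ hD)
  · exact Or.inr (mem_union_left _ hB)

lemma IsBC.join {G : SimpleGraph V} {A B C D : Finset V} [DecidableEq V]
    (h1 : IsBC G A B) (h2 : IsBC G C D) : IsBC G (A ∪ C) (B ∩ D) := by
  exact (h1.swap.meet h2.swap).swap

end BC

section BC2
variable {V : Type*} [Fintype V] {G : SimpleGraph V}

/-- A minimum bicover. -/
def IsMinBC (G : SimpleGraph V) (A B : Finset V) : Prop :=
  IsBC G A B ∧ A.card + B.card = bcMin G

lemma IsMinBC.swap {A B : Finset V} (h : IsMinBC G A B) : IsMinBC G B A :=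
  ⟨h.1.swap, by rw [Nat.add_comm]; exact h.2⟩

lemma IsMinBC.meet_join {A B C D : Finset V} [DecidableEq V]
    (h1 : IsMinBC G A B) (h2 : IsMinBC G C D) :
    IsMinBC G (A ∩ C) (B ∪ D) ∧ IsMinBC G (A ∪ C) (B ∩ D) := by
  have hm := h1.1.meet h2.1
  have hj := h1.1.join h2.1
  have c1 := bcMin_le hm
  have c2 := bcMin_le hj
  have key : ((A ∩ C).card + (B ∪ D).card) + ((A ∪ C).card + (B ∩ D).card)
      = (A.card + B.card) + (C.card + D.card) := by
    have hA : (A ∩ C).card + (A ∪ C).card = A.card + C.card :=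
      Finset.card_inter_add_card_union A C
    have hB : (B ∪ D).card + (B ∩ D).card = B.card + D.card :=
      Finset.card_union_add_card_inter B D
    omega
  rw [h1.2, h2.2] at key
  exact ⟨⟨hm, by omega⟩, ⟨hj, by omega⟩⟩

lemma IsMinBC.meet {A B C D : Finset V} [DecidableEq V]
    (h1 : IsMinBC G A B) (h2 : IsMinBC G C D) : IsMinBC G (A ∩ C) (B ∪ D) :=
  (h1.meet_join h2).1

lemma IsMinBC.join {A B C D : Finset V} [DecidableEq V]
    (h1 : IsMinBC G A B) (h2 : IsMinBC G C D) : IsMinBC G (A ∪ C) (B ∩ D) :=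
  (h1.meet_join h2).2

/-- The half-integral LP point associated to a bicover. -/
noncomputable def bcPoint [DecidableEq V] (A B : Finset V) : V → ℝ :=
  fun v => ((if v ∈ A then (1:ℝ) else 0) + (if v ∈ B then (1:ℝ) else 0)) / 2

lemma bcPoint_feasible [DecidableEq V] {A B : Finset V} (h : IsBC G A B) : LPFeasible G (bcPoint A B) := by
  constructor
  · intro v
    unfold bcPoint
    split_ifs <;> norm_num
  · intro u v huv
    have h1 := h u v huv
    have h2 := h v u huv.symm
    unfold bcPoint
    rcases h1 with h1 | h1 <;> rcases h2 with h2 | h2 <;>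
      simp only [h1, h2, if_pos] <;> split_ifs <;> norm_num

lemma bcPoint_value [DecidableEq V] (A B : Finset V) :
    LPValue (bcPoint A B) = (A.card + B.card) / 2 := by
  classical
  unfold LPValue bcPoint
  rw [← Finset.sum_div]
  congr 1
  rw [Finset.sum_add_distrib, Finset.sum_boole, Finset.sum_boole]
  simp [Finset.filter_mem_eq_inter]

end BC2

section Round
variable {V : Type*} [Fintype V] [DecidableEq V] {G : SimpleGraph V}

/-- Threshold rounding of a half-integral feasible point gives a bicover of cost exactly
twice the LP value. -/
lemma round_half {z : V → ℝ} (hf : LPFeasible G z) (hh : HalfIntegral z) :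
    ∃ A B : Finset V, IsBC G A B ∧ ((A.card + B.card : ℝ) = 2 * LPValue z) ∧
      ∀ v, (v ∈ A ↔ (1:ℝ)/2 ≤ z v) ∧ (v ∈ B ↔ (1:ℝ)/2 < z v) := by
  classical
  refine ⟨univ.filter (fun v => (1:ℝ)/2 ≤ z v), univ.filter (fun v => (1:ℝ)/2 < z v),
    ?_, ?_, fun v => ⟨by simp, by simp⟩⟩
  · intro u v huv
    have h1 := hf.2 u v huv
    by_cases hu : (1:ℝ)/2 ≤ z u
    · exact Or.inl (by simp only [mem_filter, mem_univ, true_and]; exact hu)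
    · exact Or.inr (by simp only [mem_filter, mem_univ, true_and]; linarith)
  · rw [LPValue, Finset.mul_sum]
    rw [Finset.card_filter, Finset.card_filter]
    push_cast
    rw [← Finset.sum_add_distrib]
    apply Finset.sum_congr rfl
    intro v _
    rcases hh v with h | h | h <;> rw [h] <;> norm_num

end Round

section Half
variable {V : Type*} [Fintype V] [DecidableEq V] {G : SimpleGraph V}

lemma halfIntegralize (G : SimpleGraph V) {y : V → ℝ} (hy : LPFeasible G y) :
    ∃ z : V → ℝ, LPFeasible G z ∧ HalfIntegral z ∧ LPValue z ≤ LPValue y ∧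
      ∀ v, (y v = 0 ∨ y v = (1:ℝ)/2 ∨ y v = 1) → z v = y v := by
  classical
  suffices H : ∀ n (y : V → ℝ), LPFeasible G y →
      (univ.filter (fun v => ¬(y v = 0 ∨ y v = (1:ℝ)/2 ∨ y v = 1))).card = n →
      ∃ z : V → ℝ, LPFeasible G z ∧ HalfIntegral z ∧ LPValue z ≤ LPValue y ∧
        ∀ v, (y v = 0 ∨ y v = (1:ℝ)/2 ∨ y v = 1) → z v = y v by
    exact H _ y hy rfl
  intro n
  induction n using Nat.strong_induction_on with
  | _ n IH =>
  intro y hy hn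
  by_cases hF : (univ.filter (fun v => ¬(y v = 0 ∨ y v = (1:ℝ)/2 ∨ y v = 1))) = ∅
  · refine ⟨y, hy, ?_, le_refl _, fun v _ => rfl⟩
    intro v
    by_contra hv
    exact (Finset.eq_empty_iff_forall_notMem.1 hF v) (mem_filter.2 ⟨mem_univ v, hv⟩)
  have hFne : (univ.filter (fun v => ¬(y v = 0 ∨ y v = (1:ℝ)/2 ∨ y v = 1))).Nonempty :=
    Finset.nonempty_iff_ne_empty.2 hF
  set A : Finset V := univ.filter (fun v => 0 < y v ∧ y v < 1/2) with hAdef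
  set B : Finset V := univ.filter (fun v => 1/2 < y v ∧ y v < 1) with hBdef
  have hmemA : ∀ v, v ∈ A ↔ (0 < y v ∧ y v < 1/2) := by
    intro v; rw [hAdef, mem_filter]; simp
  have hmemB : ∀ v, v ∈ B ↔ (1/2 < y v ∧ y v < 1) := by
    intro v; rw [hBdef, mem_filter]; simp
  have hdisj : ∀ v, v ∈ B → v ∉ A := by
    intro v hv ha
    have h1 := (hmemA v).1 ha
    have h2 := (hmemB v).1 hv
    linarith [h1.2, h2.1]
  have htri : ∀ v, v ∉ A → v ∉ B → (y v = 0 ∨ y v = (1:ℝ)/2 ∨ y v = 1) := by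
    intro v hA hB
    rw [hmemA] at hA
    rw [hmemB] at hB
    have h0 := (hy.1 v).1
    have h1 := (hy.1 v).2
    by_cases e0 : y v = 0
    · exact Or.inl e0
    by_cases eh : y v = (1:ℝ)/2
    · exact Or.inr (Or.inl eh)
    refine Or.inr (Or.inr ?_)
    rcases lt_or_ge (y v) (1/2) with h | h
    · exact absurd ⟨lt_of_le_of_ne h0 (Ne.symm e0), h⟩ hA
    · rcases lt_or_ge (y v) 1 with h' | h'
      · exact absurd ⟨lt_of_le_of_ne h (Ne.symm eh), h'⟩ hB
      · linarith
  have hA_F : ∀ v, v ∈ A → v ∈ univ.filter (fun v => ¬(y v = 0 ∨ y v = (1:ℝ)/2 ∨ y v = 1)) := by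
    intro v hv
    have h := (hmemA v).1 hv
    refine mem_filter.2 ⟨mem_univ v, ?_⟩
    rintro (h'|h'|h') <;> rw [h'] at h <;> [exact lt_irrefl _ h.1; exact lt_irrefl _ h.2;
      exact absurd h.2 (by norm_num)]
  have hB_F : ∀ v, v ∈ B → v ∈ univ.filter (fun v => ¬(y v = 0 ∨ y v = (1:ℝ)/2 ∨ y v = 1)) := by
    intro v hv
    have h := (hmemB v).1 hv
    refine mem_filter.2 ⟨mem_univ v, ?_⟩
    rintro (h'|h'|h') <;> rw [h'] at h <;> [exact absurd h.1 (by norm_num);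
      exact lt_irrefl _ h.1; exact lt_irrefl _ h.2]
  rcases le_or_gt B.card A.card with hc | hc
  · -- Case 1 : move A down, B up
    have hAne : A.Nonempty := by
      obtain ⟨w, hw⟩ := hFne
      have hw' := (mem_filter.1 hw).2
      by_cases hwA : w ∈ A
      · exact ⟨w, hwA⟩
      · by_cases hwB : w ∈ B
        · exact Finset.card_pos.1 (lt_of_lt_of_le (Finset.card_pos.2 ⟨w, hwB⟩) hc)
        · exact absurd (htri w hwA hwB) hw'
    set T : Finset ℝ := A.image y ∪ B.image (fun v => 1 - y v) with hTdef
    have hTne : T.Nonempty := (hAne.image y).mono Finset.subset_union_left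
    set ε : ℝ := T.min' hTne with hε
    have hεA : ∀ a ∈ A, ε ≤ y a := fun a ha =>
      Finset.min'_le T _ (Finset.mem_union_left _ (Finset.mem_image_of_mem y ha))
    have hεB : ∀ b ∈ B, ε ≤ 1 - y b := fun b hb =>
      Finset.min'_le T _ (Finset.mem_union_right _ (Finset.mem_image_of_mem _ hb))
    have hεpos : 0 < ε := by
      have hmem : ε ∈ T := T.min'_mem hTne
      rw [hTdef, Finset.mem_union] at hmem
      rcases hmem with hm | hm
      · obtain ⟨a, ha, hae⟩ := Finset.mem_image.1 hm
        have h0 := ((hmemA a).1 ha).1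
        rwa [hae] at h0
      · obtain ⟨b, hb, hbe⟩ := Finset.mem_image.1 hm
        have h0 : (0:ℝ) < 1 - y b := by linarith [((hmemB b).1 hb).2]
        rwa [hbe] at h0
    set z : V → ℝ := fun v => if v ∈ A then y v - ε else if v ∈ B then y v + ε else y v
      with hzdef
    have hzA : ∀ v ∈ A, z v = y v - ε := by intro v hv; simp only [hzdef, if_pos hv]
    have hzB : ∀ v ∈ B, z v = y v + ε := by
      intro v hv; simp only [hzdef, if_neg (hdisj v hv), if_pos hv]
    have hzO : ∀ v, v ∉ A → v ∉ B → z v = y v := by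
      intro v h1 h2; simp only [hzdef, if_neg h1, if_neg h2]
    have hz_nA : ∀ v, v ∉ A → y v ≤ z v := by
      intro v h1
      by_cases h2 : v ∈ B
      · rw [hzB v h2]; linarith
      · rw [hzO v h1 h2]
    have hzfeas : LPFeasible G z := by
      constructor
      · intro v
        by_cases h1 : v ∈ A
        · rw [hzA v h1]
          have h := (hmemA v).1 h1
          constructor
          · linarith [hεA v h1]
          · linarith [h.2]
        · by_cases h2 : v ∈ B
          · rw [hzB v h2]
            have h := (hmemB v).1 h2
            constructor
            · linarith [h.1]
            · linarith [hεB v h2]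
          · rw [hzO v h1 h2]; exact hy.1 v
      · have key : ∀ u v, G.Adj u v → u ∈ A → 1 ≤ z u + z v := by
          intro u v huv hu
          have hsum := hy.2 u v huv
          have hu' := (hmemA u).1 hu
          by_cases hv : v ∈ A
          · exfalso
            have hv' := (hmemA v).1 hv
            linarith [hu'.2, hv'.2]
          by_cases hvB : v ∈ B
          · rw [hzA u hu, hzB v hvB]; linarith
          · have h3 := htri v hv hvB
            have hyv1 : y v = 1 := by
              rcases h3 with h | h | h
              · exfalso; rw [h] at hsum; linarith [hu'.2]
              · exfalso; rw [h] at hsum; linarith [hu'.2]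
              · exact h
            rw [hzA u hu, hzO v hv hvB, hyv1]
            linarith [hεA u hu]
        intro u v huv
        by_cases hu : u ∈ A
        · exact key u v huv hu
        by_cases hv : v ∈ A
        · have := key v u huv.symm hv; linarith
        · have h1 := hz_nA u hu
          have h2 := hz_nA v hv
          have := hy.2 u v huv
          linarith
    have hzval : LPValue z ≤ LPValue y := by
      have hform : ∀ v, z v = y v + (if v ∈ A then -ε else if v ∈ B then ε else 0) := by
        intro v; simp only [hzdef]; split_ifs <;> ring
      have : LPValue z = LPValue y + ((B.card : ℝ) * ε - (A.card : ℝ) * ε) := by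
        unfold LPValue
        simp_rw [hform]
        rw [Finset.sum_add_distrib]
        congr 1
        rw [Finset.sum_ite, Finset.sum_ite]
        rw [Finset.sum_const, Finset.sum_const, Finset.sum_const]
        have e1 : univ.filter (fun v => v ∈ A) = A := by ext v; simp
        have e2 : (univ.filter (fun v => ¬ v ∈ A)).filter (fun v => v ∈ B) = B := by
          ext v; simp only [mem_filter, mem_univ, true_and]
          exact ⟨fun h => h.2, fun h => ⟨hdisj v h, h⟩⟩
        rw [e1, e2]
        simp [nsmul_eq_mul]
        ring
      rw [this]
      have hcc : (B.card : ℝ) ≤ (A.card : ℝ) := Nat.cast_le.2 hc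
      nlinarith [hεpos]
    have hpres : ∀ v, (y v = 0 ∨ y v = (1:ℝ)/2 ∨ y v = 1) → z v = y v := by
      intro v hv
      have h1 : v ∉ A := fun h => (mem_filter.1 (hA_F v h)).2 hv
      have h2 : v ∉ B := fun h => (mem_filter.1 (hB_F v h)).2 hv
      exact hzO v h1 h2
    have hsub : (univ.filter (fun v => ¬(z v = 0 ∨ z v = (1:ℝ)/2 ∨ z v = 1))) ⊆
        (univ.filter (fun v => ¬(y v = 0 ∨ y v = (1:ℝ)/2 ∨ y v = 1))) := by
      intro v hv
      rw [mem_filter] at hv ⊢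
      refine ⟨mem_univ v, fun hyv => hv.2 ?_⟩
      rw [hpres v hyv]; exact hyv
    have hwit : ∃ w, w ∈ (univ.filter (fun v => ¬(y v = 0 ∨ y v = (1:ℝ)/2 ∨ y v = 1))) ∧
        w ∉ (univ.filter (fun v => ¬(z v = 0 ∨ z v = (1:ℝ)/2 ∨ z v = 1))) := by
      have hmem : ε ∈ T := T.min'_mem hTne
      rw [hTdef, Finset.mem_union] at hmem
      rcases hmem with hm | hm
      · obtain ⟨a, ha, hae⟩ := Finset.mem_image.1 hm
        refine ⟨a, hA_F a ha, fun hcon => (mem_filter.1 hcon).2 (Or.inl ?_)⟩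
        rw [hzA a ha]
        have hea : y a = ε := hae
        linarith
      · obtain ⟨b, hb, hbe⟩ := Finset.mem_image.1 hm
        refine ⟨b, hB_F b hb, fun hcon => (mem_filter.1 hcon).2 (Or.inr (Or.inr ?_))⟩
        rw [hzB b hb]
        have heb : 1 - y b = ε := hbe
        linarith
    obtain ⟨w, hwF, hwF'⟩ := hwit
    have hlt : (univ.filter (fun v => ¬(z v = 0 ∨ z v = (1:ℝ)/2 ∨ z v = 1))).card < n := by
      rw [← hn]
      exact Finset.card_lt_card ((Finset.ssubset_iff_of_subset hsub).2 ⟨w, hwF, hwF'⟩)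
    obtain ⟨z', hz'f, hz'h, hz'v, hz'p⟩ := IH _ hlt z hzfeas rfl
    refine ⟨z', hz'f, hz'h, le_trans hz'v hzval, fun v hv => ?_⟩
    have h1 := hpres v hv
    rw [hz'p v (by rw [h1]; exact hv), h1]
  · -- Case 2 : move A up, B down
    have hBne : B.Nonempty := Finset.card_pos.1 (lt_of_le_of_lt (Nat.zero_le _) hc)
    set T : Finset ℝ := A.image (fun v => 1/2 - y v) ∪ B.image (fun v => y v - 1/2) with hTdef
    have hTne : T.Nonempty := (hBne.image _).mono Finset.subset_union_right
    set ε : ℝ := T.min' hTne with hε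
    have hεA : ∀ a ∈ A, ε ≤ 1/2 - y a := fun a ha =>
      Finset.min'_le T _ (Finset.mem_union_left _ (Finset.mem_image_of_mem _ ha))
    have hεB : ∀ b ∈ B, ε ≤ y b - 1/2 := fun b hb =>
      Finset.min'_le T _ (Finset.mem_union_right _ (Finset.mem_image_of_mem _ hb))
    have hεpos : 0 < ε := by
      have hmem : ε ∈ T := T.min'_mem hTne
      rw [hTdef, Finset.mem_union] at hmem
      rcases hmem with hm | hm
      · obtain ⟨a, ha, hae⟩ := Finset.mem_image.1 hm
        have h0 : (0:ℝ) < 1/2 - y a := by linarith [((hmemA a).1 ha).2]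
        rwa [hae] at h0
      · obtain ⟨b, hb, hbe⟩ := Finset.mem_image.1 hm
        have h0 : (0:ℝ) < y b - 1/2 := by linarith [((hmemB b).1 hb).1]
        rwa [hbe] at h0
    set z : V → ℝ := fun v => if v ∈ A then y v + ε else if v ∈ B then y v - ε else y v
      with hzdef
    have hzA : ∀ v ∈ A, z v = y v + ε := by intro v hv; simp only [hzdef, if_pos hv]
    have hzB : ∀ v ∈ B, z v = y v - ε := by
      intro v hv; simp only [hzdef, if_neg (hdisj v hv), if_pos hv]
    have hzO : ∀ v, v ∉ A → v ∉ B → z v = y v := by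
      intro v h1 h2; simp only [hzdef, if_neg h1, if_neg h2]
    have hz_nB : ∀ v, v ∉ B → y v ≤ z v := by
      intro v h2
      by_cases h1 : v ∈ A
      · rw [hzA v h1]; linarith
      · rw [hzO v h1 h2]
    have hzBge : ∀ v ∈ B, 1/2 ≤ z v := by
      intro v hv; rw [hzB v hv]; linarith [hεB v hv]
    have hzfeas : LPFeasible G z := by
      constructor
      · intro v
        by_cases h1 : v ∈ A
        · rw [hzA v h1]
          have h := (hmemA v).1 h1
          constructor
          · linarith [h.1]
          · linarith [hεA v h1]
        · by_cases h2 : v ∈ B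
          · rw [hzB v h2]
            have h := (hmemB v).1 h2
            constructor
            · linarith [hεB v h2]
            · linarith [h.2]
          · rw [hzO v h1 h2]; exact hy.1 v
      · have key : ∀ u v, G.Adj u v → u ∈ B → 1 ≤ z u + z v := by
          intro u v huv hu
          have hsum := hy.2 u v huv
          have hu' := (hmemB u).1 hu
          by_cases hvB : v ∈ B
          · linarith [hzBge u hu, hzBge v hvB]
          by_cases hvA : v ∈ A
          · rw [hzB u hu, hzA v hvA]; linarith
          · have h3 := htri v hvA hvB
            have hyv : 1/2 ≤ y v := by
              rcases h3 with h | h | h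
              · exfalso; rw [h] at hsum; linarith [hu'.2]
              · rw [h]
              · rw [h]; norm_num
            rw [hzO v hvA hvB]
            linarith [hzBge u hu]
        intro u v huv
        by_cases hu : u ∈ B
        · exact key u v huv hu
        by_cases hv : v ∈ B
        · have := key v u huv.symm hv; linarith
        · have h1 := hz_nB u hu
          have h2 := hz_nB v hv
          have := hy.2 u v huv
          linarith
    have hzval : LPValue z ≤ LPValue y := by
      have hform : ∀ v, z v = y v + (if v ∈ A then ε else if v ∈ B then -ε else 0) := by
        intro v; simp only [hzdef]; split_ifs <;> ring
      have : LPValue z = LPValue y + ((A.card : ℝ) * ε - (B.card : ℝ) * ε) := by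
        unfold LPValue
        simp_rw [hform]
        rw [Finset.sum_add_distrib]
        congr 1
        rw [Finset.sum_ite, Finset.sum_ite]
        rw [Finset.sum_const, Finset.sum_const, Finset.sum_const]
        have e1 : univ.filter (fun v => v ∈ A) = A := by ext v; simp
        have e2 : (univ.filter (fun v => ¬ v ∈ A)).filter (fun v => v ∈ B) = B := by
          ext v; simp only [mem_filter, mem_univ, true_and]
          exact ⟨fun h => h.2, fun h => ⟨hdisj v h, h⟩⟩
        rw [e1, e2]
        simp [nsmul_eq_mul]
        ring
      rw [this]
      have hcc : (A.card : ℝ) ≤ (B.card : ℝ) := Nat.cast_le.2 (le_of_lt hc)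
      nlinarith [hεpos]
    have hpres : ∀ v, (y v = 0 ∨ y v = (1:ℝ)/2 ∨ y v = 1) → z v = y v := by
      intro v hv
      have h1 : v ∉ A := fun h => (mem_filter.1 (hA_F v h)).2 hv
      have h2 : v ∉ B := fun h => (mem_filter.1 (hB_F v h)).2 hv
      exact hzO v h1 h2
    have hsub : (univ.filter (fun v => ¬(z v = 0 ∨ z v = (1:ℝ)/2 ∨ z v = 1))) ⊆
        (univ.filter (fun v => ¬(y v = 0 ∨ y v = (1:ℝ)/2 ∨ y v = 1))) := by
      intro v hv
      rw [mem_filter] at hv ⊢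
      refine ⟨mem_univ v, fun hyv => hv.2 ?_⟩
      rw [hpres v hyv]; exact hyv
    have hwit : ∃ w, w ∈ (univ.filter (fun v => ¬(y v = 0 ∨ y v = (1:ℝ)/2 ∨ y v = 1))) ∧
        w ∉ (univ.filter (fun v => ¬(z v = 0 ∨ z v = (1:ℝ)/2 ∨ z v = 1))) := by
      have hmem : ε ∈ T := T.min'_mem hTne
      rw [hTdef, Finset.mem_union] at hmem
      rcases hmem with hm | hm
      · obtain ⟨a, ha, hae⟩ := Finset.mem_image.1 hm
        refine ⟨a, hA_F a ha, fun hcon => (mem_filter.1 hcon).2 (Or.inr (Or.inl ?_))⟩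
        rw [hzA a ha]
        have hea : 1/2 - y a = ε := hae
        linarith
      · obtain ⟨b, hb, hbe⟩ := Finset.mem_image.1 hm
        refine ⟨b, hB_F b hb, fun hcon => (mem_filter.1 hcon).2 (Or.inr (Or.inl ?_))⟩
        rw [hzB b hb]
        have heb : y b - 1/2 = ε := hbe
        linarith
    obtain ⟨w, hwF, hwF'⟩ := hwit
    have hlt : (univ.filter (fun v => ¬(z v = 0 ∨ z v = (1:ℝ)/2 ∨ z v = 1))).card < n := by
      rw [← hn]
      exact Finset.card_lt_card ((Finset.ssubset_iff_of_subset hsub).2 ⟨w, hwF, hwF'⟩)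
    obtain ⟨z', hz'f, hz'h, hz'v, hz'p⟩ := IH _ hlt z hzfeas rfl
    refine ⟨z', hz'f, hz'h, le_trans hz'v hzval, fun v hv => ?_⟩
    have h1 := hpres v hv
    rw [hz'p v (by rw [h1]; exact hv), h1]
end Half


section Main
variable {V : Type*} [Fintype V] [DecidableEq V] {G : SimpleGraph V}

lemma bcMin_le_two_value {y : V → ℝ} (hy : LPFeasible G y) :
    (bcMin G : ℝ) ≤ 2 * LPValue y := by
  obtain ⟨z, hzf, hzh, hzv, -⟩ := halfIntegralize G hy
  obtain ⟨A, B, hbc, hcard, -⟩ := round_half hzf hzh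
  have h1 : (bcMin G : ℝ) ≤ ((A.card : ℝ) + (B.card : ℝ)) := by
    have := bcMin_le hbc
    push_cast
    exact_mod_cast this
  rw [hcard] at h1
  linarith

lemma bcPoint_optimal {A B : Finset V} (h : IsMinBC G A B) :
    LPOptimal G (bcPoint A B) := by
  refine ⟨bcPoint_feasible h.1, fun y hy => ?_⟩
  rw [bcPoint_value]
  have h2 := bcMin_le_two_value (G := G) hy
  rw [← h.2] at h2
  push_cast at h2 ⊢
  linarith

lemma opt_value_le {x : V → ℝ} (hx : LPOptimal G x) :
    2 * LPValue x ≤ (bcMin G : ℝ) := by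
  obtain ⟨A, B, hbc, hcard⟩ := exists_bcMin G
  have h := hx.2 _ (bcPoint_feasible hbc)
  rw [bcPoint_value] at h
  rw [← hcard]
  push_cast at h ⊢
  linarith

lemma exists_witness_minBC {x : V → ℝ} (hx : LPOptimal G x) {v : V}
    (hv : x v = 0 ∨ x v = 1) :
    ∃ C D : Finset V, IsMinBC G C D ∧ (v ∈ C ↔ v ∈ D) := by
  obtain ⟨z, hzf, hzh, hzv, hzp⟩ := halfIntegralize G hx.1
  obtain ⟨C, D, hbc, hcard, hmem⟩ := round_half hzf hzh
  have hzx : z v = x v := hzp v (by rcases hv with h | h; exacts [Or.inl h, Or.inr (Or.inr h)])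
  have hlow : bcMin G ≤ C.card + D.card := bcMin_le hbc
  have hup : ((C.card : ℝ) + (D.card : ℝ)) ≤ (bcMin G : ℝ) := by
    rw [hcard]
    have h1 := opt_value_le hx
    linarith
  have hmin : C.card + D.card = bcMin G := by
    have heq : ((C.card + D.card : ℕ) : ℝ) = ((bcMin G : ℕ) : ℝ) := by
      push_cast
      refine le_antisymm hup ?_
      exact_mod_cast hlow
    exact_mod_cast heq
  refine ⟨C, D, ⟨hbc, hmin⟩, ?_⟩
  rw [(hmem v).1, (hmem v).2, hzx]
  rcases hv with h | h <;> rw [h] <;> constructor <;> intro h' <;> linarith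

lemma minBC_combine {A B C D : Finset V} (h1 : IsMinBC G A B) (h2 : IsMinBC G C D) :
    ∃ L R : Finset V, IsMinBC G L R ∧
      (∀ v, (v ∈ L ↔ ((v ∈ A ∧ v ∈ C) ∨ (v ∈ A ∧ v ∈ D) ∨ (v ∈ C ∧ v ∈ D))) ∧
            (v ∈ R ↔ ((v ∈ B ∨ v ∈ D) ∧ (v ∈ B ∨ v ∈ C) ∧ (v ∈ D ∨ v ∈ C)))) := by
  have hP := h1.meet h2
  have hQ := h1.meet h2.swap
  have hR := h2.meet h2.swap
  have hS := hP.join hQ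
  have hT := hS.join hR
  refine ⟨_, _, hT, fun v => ⟨?_, ?_⟩⟩ <;>
    simp only [Finset.mem_union, Finset.mem_inter] <;> tauto

set_option maxHeartbeats 2000000 in
lemma exists_sym_minBC (G : SimpleGraph V) :
    ∃ A B : Finset V, IsMinBC G A B ∧
      ∀ v, (∃ x : V → ℝ, LPOptimal G x ∧ (x v = 0 ∨ x v = 1)) → (v ∈ A ↔ v ∈ B) := by
  classical
  suffices H : ∀ s : Finset V, ∃ A B : Finset V, IsMinBC G A B ∧
      ∀ v ∈ s, (∃ x : V → ℝ, LPOptimal G x ∧ (x v = 0 ∨ x v = 1)) → (v ∈ A ↔ v ∈ B) by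
    obtain ⟨A, B, ha, hb⟩ := H Finset.univ
    exact ⟨A, B, ha, fun v => hb v (mem_univ v)⟩
  intro s
  induction s using Finset.induction_on with
  | empty =>
      obtain ⟨A, B, h1, h2⟩ := exists_bcMin G
      exact ⟨A, B, ⟨h1, h2⟩, fun v hv => absurd hv (Finset.notMem_empty v)⟩
  | @insert w s hw IH =>
      obtain ⟨A, B, hAB, hsym⟩ := IH
      by_cases hwit : ∃ x : V → ℝ, LPOptimal G x ∧ (x w = 0 ∨ x w = 1)
      · obtain ⟨x, hx, hxv⟩ := hwit
        obtain ⟨C, D, hCD, hCDsym⟩ := exists_witness_minBC hx hxv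
        obtain ⟨L, R, hLR, hmem⟩ := minBC_combine hAB hCD
        refine ⟨L, R, hLR, ?_⟩
        intro v hv hvx
        rw [(hmem v).1, (hmem v).2]
        rcases Finset.mem_insert.1 hv with rfl | hv'
        · tauto
        · have := hsym v hv' hvx
          tauto
      · refine ⟨A, B, hAB, ?_⟩
        intro v hv hvx
        rcases Finset.mem_insert.1 hv with rfl | hv'
        · exact absurd hvx hwit
        · exact hsym v hv' hvx

end Main


/-- There is an LP-optimal point that is integral on the maximal set of integer variables. -/
theorem exists_maximal_integral_opt {V : Type*} [Fintype V] (G : SimpleGraph V) :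
    ∃ xhat : V → ℝ, LPOptimal G xhat ∧
      ∀ x : V → ℝ, LPOptimal G x → ∀ v, (x v = 0 ∨ x v = 1) → (xhat v = 0 ∨ xhat v = 1) := by
  classical
  obtain ⟨A, B, hAB, hsym⟩ := exists_sym_minBC G
  refine ⟨bcPoint A B, bcPoint_optimal hAB, ?_⟩
  intro x hx v hv
  have h := hsym v ⟨x, hx, hv⟩
  unfold bcPoint
  by_cases hvA : v ∈ A
  · have hvB : v ∈ B := h.1 hvA
    right; rw [if_pos hvA, if_pos hvB]; norm_num
  · have hvB : v ∉ B := fun hb => hvA (h.2 hb)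
    left; rw [if_neg hvA, if_neg hvB]; norm_num
end

section
/- Let G = (V, E) be a finite simple graph, let y be an LP-optimal point of the vertex-cover LP of G with y_v ∈ {0,1} for all v ∈ V, and let x' be an LP-optimal half-integral point with x'_v = 1 for a given vertex v. Then there exists an LP-optimal point z with z_u ∈ {0,1} for all u ∈ V and z_v = 1. -/
namespace LPOptimal

variable {V : Type*} [Fintype V] {G : SimpleGraph V}

theorem of_value_le {y z : V → ℝ} (hy : LPOptimal G y) (hz : LPFeasible G z)
    (hzy : LPValue z ≤ LPValue y) : LPOptimal G z :=
  ⟨hz, fun q hq => hzy.trans (hy.2 q hq)⟩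

end LPOptimal

section FillHalves

variable {V : Type*}

noncomputable def fillHalves (x y : V → ℝ) (u : V) : ℝ :=
  if x u = 1 then 1 else if x u = 0 then 0 else y u

noncomputable def fillHalvesCompanion (x y : V → ℝ) (u : V) : ℝ :=
  x u + (y u - fillHalves x y u) / 2

variable {x y : V → ℝ} {u : V}

@[simp]
theorem fillHalves_of_eq_one (h : x u = 1) : fillHalves x y u = 1 := by
  simp [fillHalves, h]

@[simp]
theorem fillHalves_of_eq_zero (h : x u = 0) : fillHalves x y u = 0 := by
  simp [fillHalves, h]

@[simp]
theorem fillHalves_of_eq_half (h : x u = 1 / 2) : fillHalves x y u = y u := by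
  norm_num [fillHalves, h]

theorem fillHalves_eq_zero_or_one (hx : HalfIntegral x) (hy : ∀ u, y u = 0 ∨ y u = 1) (u : V) :
    fillHalves x y u = 0 ∨ fillHalves x y u = 1 := by
  rcases hx u with h | h | h <;> simp [h, hy u]

variable [Fintype V] {G : SimpleGraph V}

theorem LPFeasible.fillHalves (hx : LPFeasible G x) (hxh : HalfIntegral x)
    (hy : LPFeasible G y) : LPFeasible G (fillHalves x y) := by
  refine ⟨fun u => ?_, fun u w huw => ?_⟩
  · rcases hxh u with h | h | h <;> simp [h, hy.1 u]
  · have hx_edge := hx.2 u w huw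
    have hy_edge := hy.2 u w huw
    rcases hxh u with h | h | h <;> rcases hxh w with g | g | g <;>
      simp only [fillHalves_of_eq_one, fillHalves_of_eq_zero,
        fillHalves_of_eq_half, h, g] at hx_edge ⊢ <;>
      linarith [(hy.1 u).1, (hy.1 w).1]

theorem LPFeasible.fillHalvesCompanion (hx : LPFeasible G x) (hxh : HalfIntegral x)
    (hy : LPFeasible G y) : LPFeasible G (fillHalvesCompanion x y) := by
  refine ⟨fun u => ?_, fun u w huw => ?_⟩
  · have := hy.1 u
    rcases hxh u with h | h | h <;>
      simp only [_root_.fillHalvesCompanion, fillHalves_of_eq_one,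
        fillHalves_of_eq_zero, fillHalves_of_eq_half, h] <;>
      constructor <;> linarith
  · have hx_edge := hx.2 u w huw
    have hy_edge := hy.2 u w huw
    rcases hxh u with h | h | h <;> rcases hxh w with g | g | g <;>
      simp only [_root_.fillHalvesCompanion, fillHalves_of_eq_one,
        fillHalves_of_eq_zero, fillHalves_of_eq_half, h, g] at hx_edge ⊢ <;>
      linarith [(hy.1 u).1, (hy.1 w).1]

theorem LPValue_fillHalvesCompanion (x y : V → ℝ) :
    LPValue (fillHalvesCompanion x y) = LPValue x + (LPValue y - LPValue (fillHalves x y)) / 2 := by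
  simp only [LPValue, fillHalvesCompanion, Finset.sum_add_distrib, ← Finset.sum_div,
    Finset.sum_sub_distrib]

theorem LPOptimal.fillHalves (hx : LPOptimal G x) (hxh : HalfIntegral x) (hy : LPOptimal G y) :
    LPOptimal G (fillHalves x y) := by
  have hcomp := hx.2 _ (hx.1.fillHalvesCompanion hxh hy.1)
  rw [LPValue_fillHalvesCompanion] at hcomp
  exact hy.of_value_le (hx.1.fillHalves hxh hy.1) (by linarith)

end FillHalves

/-- If there is an integral LP-optimal point and an LP-optimal half-integral point with
x'_v = 1, then there is an integral LP-optimal point with z_v = 1. -/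
theorem integral_opt_with_v_one {V : Type*} [Fintype V] (G : SimpleGraph V)
    (y x' : V → ℝ) (v : V)
    (hy : LPOptimal G y) (hyint : ∀ u, y u = 0 ∨ y u = 1)
    (hx : LPOptimal G x') (hxh : HalfIntegral x') (hxv : x' v = 1) :
    ∃ z : V → ℝ, LPOptimal G z ∧ (∀ u, z u = 0 ∨ z u = 1) ∧ z v = 1 :=
  ⟨fillHalves x' y, hx.fillHalves hxh hy, fillHalves_eq_zero_or_one hxh hyint,
    fillHalves_of_eq_one hxv⟩
end

section
/- Let G = (V, E) be a finite simple graph and let x* be an LP-optimal point of the vertex-cover LP of G. Set V₁ = {v ∈ V : x*_v = 1} and V₀ = {v ∈ V : x*_v = 0}. Then for every subset S ⊆ V₁, the number of vertices in V₀ adjacent to some vertex of S is at least |S|, i.e. |{w ∈ V₀ : ∃ s ∈ S, sw ∈ E}| ≥ |S|. (Lemma 7.) -/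
/-- Lemma 7: for an LP-optimal point x*, every subset S of the 1-vertices has at least
|S| neighbors among the 0-vertices. -/
theorem neighbors_lemma {V : Type*} [Fintype V] (G : SimpleGraph V)
    (xstar : V → ℝ) (hx : LPOptimal G xstar) (S : Finset V)
    (hS : ∀ s ∈ S, xstar s = 1) :
    S.card ≤ Set.ncard {w : V | xstar w = 0 ∧ ∃ s ∈ S, G.Adj s w} := by
  classical
  by_contra hcon
  push_neg at hcon
  rcases S.eq_empty_or_nonempty with rfl | hSne
  · simp at hcon
  have hVne : (Finset.univ : Finset V).Nonempty := ⟨hSne.choose, Finset.mem_univ _⟩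
  set W : Set V := {w : V | xstar w = 0 ∧ ∃ s ∈ S, G.Adj s w} with hW
  have hWfin : W.Finite := Set.toFinite W
  set N : Finset V := hWfin.toFinset with hN
  have hNcard : Set.ncard W = N.card := Set.ncard_eq_toFinset_card W hWfin
  have hcard : N.card < S.card := by rw [← hNcard]; exact hcon
  -- choose epsilon
  set F : Finset ℝ := Finset.univ.image (fun v => if 0 < xstar v then xstar v else 1/2) with hF
  have hFne : F.Nonempty := hVne.image _
  set ε : ℝ := min (1/2) (F.min' hFne) with hε
  have hεpos : 0 < ε := by
    rw [hε]
    apply lt_min (by norm_num)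
    have hpos : ∀ x ∈ F, 0 < x := by
      intro x hxF
      rw [hF] at hxF
      simp only [Finset.mem_image] at hxF
      obtain ⟨v, -, hv⟩ := hxF
      rw [← hv]
      split <;> [assumption; norm_num]
    exact hpos _ (F.min'_mem hFne)
  have hεhalf : ε ≤ 1/2 := min_le_left _ _
  have hεle : ∀ v, 0 < xstar v → ε ≤ xstar v := by
    intro v hv
    have hmem : xstar v ∈ F := by
      rw [hF]; simp only [Finset.mem_image]
      exact ⟨v, Finset.mem_univ v, by rw [if_pos hv]⟩
    exact le_trans (min_le_right _ _) (F.min'_le _ hmem)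
  have hSN : ∀ v, v ∈ S → v ∉ N := by
    intro v hv hvN
    rw [hN, Set.Finite.mem_toFinset] at hvN
    have := hvN.1
    have := hS v hv
    linarith
  have hNval : ∀ v ∈ N, xstar v = 0 := by
    intro v hv
    rw [hN, Set.Finite.mem_toFinset] at hv
    exact hv.1
  -- the perturbed point
  set y : V → ℝ := fun v =>
    xstar v + (if v ∈ N then ε else 0) - (if v ∈ S then ε else 0) with hy
  have hfeas : LPFeasible G y := by
    constructor
    · intro v
      by_cases hvS : v ∈ S
      · have h1 : xstar v = 1 := hS v hvS
        have h2 : v ∉ N := hSN v hvS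
        simp only [hy, if_pos hvS, if_neg h2, h1]
        constructor <;> linarith
      · by_cases hvN : v ∈ N
        · have h0 : xstar v = 0 := hNval v hvN
          simp only [hy, if_pos hvN, if_neg hvS, h0]
          constructor <;> linarith
        · simp only [hy, if_neg hvN, if_neg hvS]
          have := hx.1.1 v
          constructor <;> linarith
    · intro u v huv
      have hsum := hx.1.2 u v huv
      have key : ∀ a b : V, G.Adj a b → a ∈ S → b ∉ S → 1 ≤ y a + y b := by
        intro a b hab haS hbS
        have ha1 : xstar a = 1 := hS a haS
        have haN : a ∉ N := hSN a haS
        by_cases hbN : b ∈ N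
        · have hb0 : xstar b = 0 := hNval b hbN
          simp only [hy, if_pos haS, if_neg haN, if_pos hbN, if_neg hbS, ha1, hb0]
          linarith
        · have hb0 : xstar b ≠ 0 := by
            intro h0
            apply hbN
            rw [hN, Set.Finite.mem_toFinset]
            exact ⟨h0, a, haS, hab⟩
          have hbpos : 0 < xstar b := lt_of_le_of_ne (hx.1.1 b).1 (Ne.symm hb0)
          have := hεle b hbpos
          simp only [hy, if_pos haS, if_neg haN, if_neg hbN, if_neg hbS, ha1]
          linarith
      by_cases huS : u ∈ S <;> by_cases hvS : v ∈ S
      · have hu1 := hS u huS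
        have hv1 := hS v hvS
        simp only [hy, if_pos huS, if_pos hvS, if_neg (hSN u huS), if_neg (hSN v hvS), hu1, hv1]
        linarith
      · exact key u v huv huS hvS
      · have := key v u huv.symm hvS huS; linarith
      · have h1 : (if u ∈ N then ε else 0) ≥ 0 := by positivity
        have h2 : (if v ∈ N then ε else 0) ≥ 0 := by positivity
        simp only [hy, if_neg huS, if_neg hvS]
        linarith
  have hval : LPValue y < LPValue xstar := by
    unfold LPValue
    have hexp : ∀ v, y v = xstar v + ((if v ∈ N then ε else 0) - (if v ∈ S then ε else 0)) := by
      intro v; rw [hy]; ring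
    calc ∑ v, y v = ∑ v, (xstar v + ((if v ∈ N then ε else 0) - (if v ∈ S then ε else 0))) := by
            exact Finset.sum_congr rfl (fun v _ => hexp v)
      _ = ∑ v, xstar v + (ε * N.card - ε * S.card) := by
            rw [Finset.sum_add_distrib, Finset.sum_sub_distrib]
            congr 1
            rw [Finset.sum_ite_mem, Finset.sum_ite_mem, Finset.univ_inter, Finset.univ_inter,
              Finset.sum_const, Finset.sum_const, nsmul_eq_mul, nsmul_eq_mul]
            ring
      _ < ∑ v, xstar v := by
            have : ε * N.card < ε * S.card := by
              apply mul_lt_mul_of_pos_left _ hεpos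
              exact_mod_cast hcard
            linarith
  exact absurd (hx.2 y hfeas) (not_le.mpr hval)
end

section
/- Let G = (V, E) be a finite simple graph, let x* be an LP-optimal half-integral point of the vertex-cover LP of G, and let v ∈ V be a vertex such that every LP-optimal point x satisfies 0 < x_v < 1. Then for each b ∈ {0,1} there exists a point x̂ that is LP-feasible with x̂_v = b, has minimal LP value among all LP-feasible points x with x_v = b, and agrees with x* on all integer coordinates of x*: x̂_u = x*_u for every u ∈ V with x*_u ∈ {0,1}. (Theorem 6: the maximal set of integer variables is inherited by both child nodes after branching on a variable outside it.) -/
open Finset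

section

variable {V : Type*}

def integralCoords (x : V → ℝ) : Set V := {u | x u = 0 ∨ x u = 1}

theorem HalfIntegral.eq_half_of_notMem_integralCoords {x : V → ℝ} (hx : HalfIntegral x) {u : V}
    (hu : u ∉ integralCoords x) : x u = 1 / 2 := by
  rcases hx u with h | h | h
  exacts [absurd (Or.inl h) hu, h, absurd (Or.inr h) hu]

variable [Fintype V] {G : SimpleGraph V}

theorem continuous_lpValue : Continuous (LPValue : (V → ℝ) → ℝ) :=
  continuous_finsetSum univ fun u _ => continuous_apply u

theorem lpValue_avg (x y : V → ℝ) :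
    LPValue (fun u => (x u + y u) / 2) = (LPValue x + LPValue y) / 2 := by
  simp only [LPValue, ← sum_div, sum_add_distrib]

theorem lpValue_piecewise_add_piecewise (I : Set V) [DecidablePred (· ∈ I)] (x y : V → ℝ) :
    LPValue (I.piecewise x y) + LPValue (I.piecewise y x) = LPValue x + LPValue y := by
  simp only [LPValue, ← sum_add_distrib]
  refine sum_congr rfl fun u _ => ?_
  by_cases hu : u ∈ I <;> simp [hu, add_comm]

theorem isCompact_setOf_lpFeasible (G : SimpleGraph V) : IsCompact {x | LPFeasible G x} := by
  have hbox : {x | LPFeasible G x} ⊆ Set.univ.pi fun _ : V => Set.Icc (0 : ℝ) 1 :=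
    fun x hx u _ => hx.1 u
  have hclosed : IsClosed {x | LPFeasible G x} := by
    simp only [LPFeasible, Set.ofPred_and, Set.ofPred_forall]
    refine .inter (isClosed_iInter fun u => .inter ?_ ?_)
      (isClosed_iInter fun u => isClosed_iInter fun w => isClosed_iInter fun _ => ?_)
    · exact isClosed_le continuous_const (continuous_apply u)
    · exact isClosed_le (continuous_apply u) continuous_const
    · exact isClosed_le continuous_const ((continuous_apply u).add (continuous_apply w))
  exact (isCompact_univ_pi fun _ => isCompact_Icc).of_isClosed_subset hclosed hbox

theorem lpFeasible_update_one [DecidableEq V] (v : V) {b : ℝ} (hb₀ : 0 ≤ b) (hb₁ : b ≤ 1) :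
    LPFeasible G (Function.update 1 v b) := by
  refine ⟨fun u => ?_, fun u w huw => ?_⟩
  · by_cases hu : u = v <;> simp [hu, hb₀, hb₁]
  · by_cases hu : u = v <;> by_cases hw : w = v
    · exact absurd (hu.trans hw.symm) (G.ne_of_adj huw)
    all_goals simp [hu, hw, hb₀]

theorem exists_lpValue_min_of_eq (G : SimpleGraph V) (v : V) {b : ℝ} (hb₀ : 0 ≤ b)
    (hb₁ : b ≤ 1) :
    ∃ y, (LPFeasible G y ∧ y v = b) ∧
      ∀ x, LPFeasible G x → x v = b → LPValue y ≤ LPValue x := by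
  classical
  have hcompact : IsCompact ({x | LPFeasible G x} ∩ {x | x v = b}) :=
    (isCompact_setOf_lpFeasible G).inter_right (isClosed_eq (continuous_apply v) continuous_const)
  obtain ⟨y, hy, hmin⟩ := hcompact.exists_isMinOn
    ⟨_, lpFeasible_update_one v hb₀ hb₁, Function.update_self ..⟩ continuous_lpValue.continuousOn
  exact ⟨y, hy, fun x hx hxv => hmin ⟨hx, hxv⟩⟩

namespace LPFeasible

variable {x y : V → ℝ}

theorem avg (hx : LPFeasible G x) (hy : LPFeasible G y) :
    LPFeasible G fun u => (x u + y u) / 2 := by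
  refine ⟨fun u => ?_, fun u w huw => ?_⟩
  · constructor <;> linarith [hx.1 u, hy.1 u]
  · linarith [hx.2 u w huw, hy.2 u w huw]

theorem piecewise (I : Set V) [DecidablePred (· ∈ I)] (hx : LPFeasible G x)
    (hy : LPFeasible G y) (hxy : ∀ u w, G.Adj u w → u ∈ I → w ∉ I → 1 ≤ x u + y w) :
    LPFeasible G (I.piecewise x y) := by
  refine ⟨fun u => ?_, fun u w huw => ?_⟩
  · by_cases hu : u ∈ I <;> simp [hu, hx.1 u, hy.1 u]
  · by_cases hu : u ∈ I <;> by_cases hw : w ∈ I <;> simp only [Set.piecewise_eq_of_mem,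
      Set.piecewise_eq_of_notMem, hu, hw, not_false_eq_true]
    · exact hx.2 u w huw
    · exact hxy u w huw hu hw
    · linarith [hxy w u huw.symm hw hu]
    · exact hy.2 u w huw

theorem eq_one_of_adj (hx : LPFeasible G x) {u w : V} (huw : G.Adj u w)
    (hu : u ∈ integralCoords x) (hw : w ∉ integralCoords x) : x u = 1 := by
  refine hu.resolve_left fun hu₀ => hw (Or.inr ?_)
  linarith [hx.2 u w huw, (hx.1 w).2]

theorem piecewise_integralCoords [DecidablePred (· ∈ integralCoords x)] (hx : LPFeasible G x)
    (hy : LPFeasible G y) : LPFeasible G ((integralCoords x).piecewise x y) :=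
  hx.piecewise _ hy fun u w huw hu hw => by linarith [hx.eq_one_of_adj huw hu hw, (hy.1 w).1]

end LPFeasible

theorem LPOptimal.lpValue_piecewise_integralCoords_le {x y : V → ℝ} (hx : LPOptimal G x)
    (hxh : HalfIntegral x) [DecidablePred (· ∈ integralCoords x)] (hy : LPFeasible G y) :
    LPValue ((integralCoords x).piecewise x y) ≤ LPValue y := by
  set z := (integralCoords x).piecewise y x
  have hmid : (fun u => (x u + z u) / 2) =
      (integralCoords x).piecewise (fun u => (x u + y u) / 2) x := by
    funext u
    by_cases hu : u ∈ integralCoords x <;> simp [z, hu]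
  have hmid_feasible : LPFeasible G fun u => (x u + z u) / 2 := by
    rw [hmid]
    refine (hx.1.avg hy).piecewise _ hx.1 fun u w huw hu hw => ?_
    linarith [hx.1.eq_one_of_adj huw hu hw, hxh.eq_half_of_notMem_integralCoords hw, (hy.1 u).1]
  have hxz : LPValue x ≤ LPValue z := by
    have := hx.2 _ hmid_feasible
    rw [lpValue_avg] at this
    linarith
  linarith [lpValue_piecewise_add_piecewise (integralCoords x) x y]

end

/-- Theorem 6: after branching on a variable fractional in every LP-optimal solution,
each child node has an optimal solution agreeing with the integer coordinates of x*. -/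
theorem nt_monotone {V : Type*} [Fintype V] (G : SimpleGraph V)
    (xstar : V → ℝ) (hx : LPOptimal G xstar) (hxh : HalfIntegral xstar)
    (v : V) (hv : ∀ x : V → ℝ, LPOptimal G x → 0 < x v ∧ x v < 1) :
    ∀ b : ℝ, b = 0 ∨ b = 1 →
      ∃ xhat : V → ℝ, LPFeasible G xhat ∧ xhat v = b ∧
        (∀ x : V → ℝ, LPFeasible G x → x v = b → LPValue xhat ≤ LPValue x) ∧
        (∀ u, (xstar u = 0 ∨ xstar u = 1) → xhat u = xstar u) := by
  classical
  intro b hb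
  have hb₀₁ : 0 ≤ b ∧ b ≤ 1 := by rcases hb with rfl | rfl <;> norm_num
  obtain ⟨y, ⟨hy, hyv⟩, hymin⟩ := exists_lpValue_min_of_eq G v hb₀₁.1 hb₀₁.2
  have hvI : v ∉ integralCoords xstar := by
    have := hv xstar hx
    rintro (h | h) <;> linarith
  refine ⟨(integralCoords xstar).piecewise xstar y, hx.1.piecewise_integralCoords hy, ?_,
    fun x hx' hxv => (hx.lpValue_piecewise_integralCoords_le hxh hy).trans (hymin x hx' hxv),
    fun u hu => Set.piecewise_eq_of_mem _ _ _ hu⟩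
  rwa [Set.piecewise_eq_of_notMem _ _ _ hvI]
end

section
/- Let G = (V, E) be a finite simple graph, let x* be an LP-optimal half-integral point of the vertex-cover LP of G with LP value OPT, and let v ∈ V be a vertex such that every LP-optimal point x satisfies 0 < x_v < 1. Then the point y defined by y_v = 1 and y_u = x*_u for u ≠ v is LP-feasible, has minimal LP value among all LP-feasible points x with x_v = 1, and its LP value equals OPT + 1/2. -/
/-!
Since `xstar` is optimal and half-integral with `0 < xstar v < 1`, we have `xstar v = 1/2`, so
raising that coordinate to `1` costs exactly `1/2`. For the lower bound, round a feasible `x` with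
`x v = 1` at a threshold `θ ∈ (0, 1/2)`: values below `θ` go to `0`, values above `1 - θ` go to `1`
and the rest to `1/2`. This map is monotone and commutes with `s ↦ 1 - s`, so it preserves
feasibility, and for `θ` uniform on `(0, 1/2)` it is unbiased, so some `θ` yields a half-integral
feasible `z` with `z v = 1` and value at most that of `x`. Such a `z` is not optimal, so its value
exceeds `OPT`; as half-integral points have values in `ℤ / 2`, it is at least `OPT + 1/2`.
-/

open MeasureTheory Set

/-- For `0 < θ ≤ 1/2` this rounds `s ∈ [0, 1]` down to `0` below `θ`, up to `1` above `1 - θ`,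
and to `1/2` in between. -/
noncomputable def thresholdRound (θ s : ℝ) : ℝ :=
  ((if θ ≤ s then 1 else 0) + 1 - (if θ ≤ 1 - s then 1 else 0)) / 2

section ThresholdRound

variable {θ s : ℝ}

lemma antitone_ite_le (s : ℝ) : Antitone fun θ : ℝ => if θ ≤ s then (1 : ℝ) else 0 := by
  intro θ θ' h
  dsimp only
  split_ifs <;> grind

lemma thresholdRound_monotone (θ : ℝ) : Monotone (thresholdRound θ) := by
  intro s t hst
  unfold thresholdRound
  gcongr
  · split_ifs <;> grind
  · split_ifs <;> grind

lemma thresholdRound_one_sub (θ s : ℝ) : thresholdRound θ (1 - s) = 1 - thresholdRound θ s := by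
  unfold thresholdRound
  rw [sub_sub_cancel]
  ring

lemma thresholdRound_nonneg (θ s : ℝ) : 0 ≤ thresholdRound θ s := by
  unfold thresholdRound
  split_ifs <;> norm_num

lemma thresholdRound_one (hθ : θ ∈ Ioc 0 1) : thresholdRound θ 1 = 1 := by
  simp [thresholdRound, hθ.1.not_ge, hθ.2]

lemma thresholdRound_eq_zero_or_half_or_one (θ s : ℝ) :
    thresholdRound θ s = 0 ∨ thresholdRound θ s = 1/2 ∨ thresholdRound θ s = 1 := by
  unfold thresholdRound
  split_ifs <;> norm_num

lemma intervalIntegrable_thresholdRound (s a b : ℝ) :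
    IntervalIntegrable (fun θ => thresholdRound θ s) volume a b :=
  (((antitone_ite_le s).intervalIntegrable.add intervalIntegrable_const).sub
    (antitone_ite_le (1 - s)).intervalIntegrable).div_const 2

lemma integral_ite_le_eq_min (hs : 0 ≤ s) :
    ∫ θ in (0 : ℝ)..1/2, (if θ ≤ s then (1 : ℝ) else 0) = min s (1/2) := by
  rcases le_total s (1/2) with h | h
  · have := intervalIntegral.integral_indicator (f := fun _ => (1 : ℝ)) (μ := volume) ⟨hs, h⟩
    simp only [indicator, mem_ofPred_eq] at this
    rw [this, min_eq_left h, intervalIntegral.integral_const, smul_eq_mul, mul_one, sub_zero]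
  · rw [min_eq_right h, intervalIntegral.integral_congr (g := fun _ => (1 : ℝ))]
    · simp
    · intro θ hθ
      rw [uIcc_of_le (by norm_num)] at hθ
      simp only [if_pos (hθ.2.trans h)]

lemma integral_thresholdRound (hs : s ∈ Icc 0 1) :
    ∫ θ in (0 : ℝ)..1/2, thresholdRound θ s = s / 2 := by
  have hstep : ∀ c,
      IntervalIntegrable (fun θ : ℝ => if θ ≤ c then (1 : ℝ) else 0) volume 0 (1/2) := fun c => (antitone_ite_le c).intervalIntegrable
  unfold thresholdRound
  rw [intervalIntegral.integral_div,
    intervalIntegral.integral_sub ((hstep s).add intervalIntegrable_const) (hstep _),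
    intervalIntegral.integral_add (hstep s) intervalIntegrable_const, intervalIntegral.integral_const,
    integral_ite_le_eq_min hs.1, integral_ite_le_eq_min (sub_nonneg.2 hs.2), smul_eq_mul]
  rcases le_total s (1/2) with h | h
  · rw [min_eq_left h, min_eq_right (by linarith)]; ring
  · rw [min_eq_right h, min_eq_left (by linarith)]; ring

lemma exists_sum_thresholdRound_le {ι : Type*} [Fintype ι] (x : ι → ℝ) (hx : ∀ i, x i ∈ Icc 0 1) :
    ∃ θ ∈ Ioo 0 (1/2), ∑ i, thresholdRound θ (x i) ≤ ∑ i, x i := by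
  by_contra! h
  have hint : IntervalIntegrable (fun θ => ∑ i, thresholdRound θ (x i)) volume 0 (1/2) := by
    simpa only [Finset.sum_fn] using
      IntervalIntegrable.sum Finset.univ fun i _ => intervalIntegrable_thresholdRound (x i) 0 (1/2)
  have hpos := intervalIntegral.intervalIntegral_pos_of_pos_on (hint.sub intervalIntegrable_const)
    (fun θ hθ => sub_pos.2 (h θ hθ)) (by norm_num)
  rw [intervalIntegral.integral_sub hint intervalIntegrable_const,
    intervalIntegral.integral_finsetSum fun i _ => intervalIntegrable_thresholdRound (x i) 0 (1/2),
    intervalIntegral.integral_const, smul_eq_mul] at hpos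
  simp only [integral_thresholdRound (hx _), ← Finset.sum_div] at hpos
  linarith

end ThresholdRound

section VertexCoverLP

variable {V : Type*} [Fintype V] {G : SimpleGraph V} {x y : V → ℝ}

theorem LPFeasible.comp_of_monotone {ψ : ℝ → ℝ} (hx : LPFeasible G x) (hψ : Monotone ψ)
    (hψ_one_sub : ∀ s, ψ (1 - s) = 1 - ψ s) (hψ_zero : 0 ≤ ψ 0) : LPFeasible G (ψ ∘ x) := by
  have hψ_one : ψ 1 ≤ 1 := by linarith [sub_zero (1 : ℝ) ▸ hψ_one_sub 0]
  refine ⟨fun u => ⟨hψ_zero.trans (hψ (hx.1 u).1), (hψ (hx.1 u).2).trans hψ_one⟩,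
    fun u w huw => ?_⟩
  have := hψ (show 1 - x u ≤ x w by linarith [hx.2 u w huw])
  rw [hψ_one_sub] at this
  simp only [Function.comp_apply]
  linarith

theorem LPFeasible.exists_halfIntegral (hx : LPFeasible G x) :
    ∃ z, LPFeasible G z ∧ HalfIntegral z ∧ LPValue z ≤ LPValue x ∧ ∀ u, x u = 1 → z u = 1 := by
  obtain ⟨θ, hθ, hle⟩ := exists_sum_thresholdRound_le x fun u => hx.1 u
  refine ⟨thresholdRound θ ∘ x, hx.comp_of_monotone (thresholdRound_monotone θ)
    (thresholdRound_one_sub θ) (thresholdRound_nonneg θ 0),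
    fun u => thresholdRound_eq_zero_or_half_or_one θ (x u), hle, fun u hu => ?_⟩
  rw [Function.comp_apply, hu, thresholdRound_one ⟨hθ.1, by linarith [hθ.2]⟩]

theorem LPFeasible.update_one [DecidableEq V] (hx : LPFeasible G x) (v : V) :
    LPFeasible G (Function.update x v 1) := by
  have hle : ∀ u, x u ≤ Function.update x v 1 u := by
    intro u
    rcases eq_or_ne u v with rfl | hne
    · simpa using (hx.1 u).2
    · simp [hne]
  refine ⟨fun u => ?_, fun u w huw => (hx.2 u w huw).trans (add_le_add (hle u) (hle w))⟩
  rcases eq_or_ne u v with rfl | hne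
  · simp
  · simpa [hne] using hx.1 u

theorem LPValue_update [DecidableEq V] (x : V → ℝ) (v : V) (a : ℝ) :
    LPValue (Function.update x v a) = LPValue x - x v + a := by
  unfold LPValue
  rw [Finset.sum_update_of_mem (Finset.mem_univ v), ← Finset.add_sum_erase _ _ (Finset.mem_univ v),
    Finset.sdiff_singleton_eq_erase]
  ring

theorem HalfIntegral.exists_LPValue_eq (hx : HalfIntegral x) : ∃ k : ℤ, LPValue x = k / 2 := by
  choose k hk using fun u => (show ∃ k : ℤ, x u = k / 2 by
    rcases hx u with h | h | h
    exacts [⟨0, by simp [h]⟩, ⟨1, by simp [h]⟩, ⟨2, by simp [h]⟩])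
  exact ⟨∑ u, k u, by simp [LPValue, hk, Finset.sum_div]⟩

theorem HalfIntegral.LPValue_add_half_le (hx : HalfIntegral x) (hy : HalfIntegral y)
    (hlt : LPValue x < LPValue y) : LPValue x + 1/2 ≤ LPValue y := by
  obtain ⟨m, hm⟩ := hx.exists_LPValue_eq
  obtain ⟨k, hk⟩ := hy.exists_LPValue_eq
  rw [hm, hk] at hlt ⊢
  have hmk : m + 1 ≤ k := by exact_mod_cast (by linarith : (m : ℝ) < k)
  have : (m : ℝ) + 1 ≤ k := by exact_mod_cast hmk
  linarith

theorem LPOptimal.LPValue_lt (hx : LPOptimal G x) (hy : LPFeasible G y) (hy_opt : ¬LPOptimal G y) :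
    LPValue x < LPValue y :=
  (hx.2 y hy).lt_of_ne fun h => hy_opt ⟨hy, fun z hz => h ▸ hx.2 z hz⟩

end VertexCoverLP

/-- Setting x_v := 1 in an LP-optimal half-integral point (v fractional in every optimal
solution) yields an optimal solution of the child node with value OPT + 1/2. -/
theorem branch_one_value {V : Type*} [Fintype V] [DecidableEq V] (G : SimpleGraph V)
    (xstar : V → ℝ) (OPT : ℝ) (hx : LPOptimal G xstar) (hxh : HalfIntegral xstar)
    (hOPT : LPValue xstar = OPT)
    (v : V) (hv : ∀ x : V → ℝ, LPOptimal G x → 0 < x v ∧ x v < 1) :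
    LPFeasible G (Function.update xstar v 1) ∧
    (∀ x : V → ℝ, LPFeasible G x → x v = 1 →
      LPValue (Function.update xstar v 1) ≤ LPValue x) ∧
    LPValue (Function.update xstar v 1) = OPT + 1/2 := by
  have hxv : xstar v = 1/2 := by
    have := hv xstar hx
    rcases hxh v with h | h | h <;> first | exact h | (rw [h] at this; norm_num at this)
  have hval : LPValue (Function.update xstar v 1) = OPT + 1/2 := by
    rw [LPValue_update, hxv, hOPT]; ring
  refine ⟨hx.1.update_one v, fun x hxf hxv1 => ?_, hval⟩
  obtain ⟨z, hzf, hzh, hzx, hz1⟩ := hxf.exists_halfIntegral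
  have hz_opt : ¬LPOptimal G z := fun hz => (hv z hz).2.ne (hz1 v hxv1)
  calc LPValue (Function.update xstar v 1) = LPValue xstar + 1/2 := by rw [hval, hOPT]
    _ ≤ LPValue z := hxh.LPValue_add_half_le hzh (hx.LPValue_lt hzf hz_opt)
    _ ≤ LPValue x := hzx
end

section
/- Let G = (V, E) be a finite simple graph, let OPT be the minimal LP value of the vertex-cover LP of G, and let v ∈ V be a vertex such that every LP-optimal point x satisfies 0 < x_v < 1. Then for each b ∈ {0,1}, every LP-feasible point x with x_v = b satisfies ∑_{u∈V} x_u ≥ OPT + 1/2. (LP content of Lemma 13: both child nodes obtained by branching on a variable that is fractional in every optimal solution have optimal value at least 1/2 more than the parent.) -/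
open Finset

section Aux

variable {V : Type*} [Fintype V]

/-- The set of coordinates where `y` is not half-integral. -/
noncomputable def badSet (y : V → ℝ) : Finset V :=
  @Finset.filter _ (fun u => y u ≠ 0 ∧ y u ≠ 1/2 ∧ y u ≠ 1) (Classical.decPred _)
    Finset.univ

lemma mem_badSet {y : V → ℝ} {u : V} :
    u ∈ badSet y ↔ y u ≠ 0 ∧ y u ≠ 1/2 ∧ y u ≠ 1 := by
  classical
  simp [badSet]

lemma halfIntegral_of_badSet_empty {y : V → ℝ} (h : badSet y = ∅) : HalfIntegral y := by
  intro u
  by_contra hc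
  push_neg at hc
  have : u ∈ badSet y := mem_badSet.2 ⟨hc.1, hc.2.1, hc.2.2⟩
  simp [h] at this

/-- One Nemhauser–Trotter rounding step: if `y` is feasible and not half-integral,
we can move it towards half-integrality without increasing the `w`-weighted value. -/
lemma nt_step {G : SimpleGraph V} {w y : V → ℝ}
    (hw : ∀ u, 0 ≤ w u) (hy : LPFeasible G y) (hB : (badSet y).Nonempty) :
    ∃ z : V → ℝ, LPFeasible G z ∧ (∑ u, w u * z u ≤ ∑ u, w u * y u) ∧
      badSet z ⊂ badSet y := by
  classical
  obtain ⟨hbdd, hedge⟩ := hy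
  set P : V → Prop := fun u => 0 < y u ∧ y u < 1/2 with hPdef
  set Q : V → Prop := fun u => 1/2 < y u ∧ y u < 1 with hQdef
  have hPQ : ∀ u, ¬ (P u ∧ Q u) := fun u h => lt_irrefl _ (h.1.2.trans h.2.1)
  have hbad : ∀ u ∈ badSet y, P u ∨ Q u := by
    intro u hu
    rw [mem_badSet] at hu
    have h0 : 0 < y u := lt_of_le_of_ne (hbdd u).1 (Ne.symm hu.1)
    have h1 : y u < 1 := lt_of_le_of_ne (hbdd u).2 hu.2.2
    rcases lt_or_gt_of_ne hu.2.1 with h | h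
    · exact Or.inl ⟨h0, h⟩
    · exact Or.inr ⟨h, h1⟩
  have hPbad : ∀ u, P u → u ∈ badSet y := by
    intro u hu
    exact mem_badSet.2 ⟨ne_of_gt hu.1, ne_of_lt hu.2, by nlinarith [hu.2]⟩
  have hQbad : ∀ u, Q u → u ∈ badSet y := by
    intro u hu
    exact mem_badSet.2 ⟨by nlinarith [hu.1], ne_of_gt hu.1, ne_of_lt hu.2⟩
  rcases le_total (∑ u, (if Q u then w u else 0)) (∑ u, (if P u then w u else 0)) with
    hcmp | hcmp
  · -- move away from 1/2 (down on P, up on Q)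
    obtain ⟨ε, hεpos, hεP, hεQ, a, haB, hattain⟩ :
        ∃ ε : ℝ, 0 < ε ∧ (∀ u, P u → ε ≤ y u) ∧ (∀ u, Q u → ε ≤ 1 - y u) ∧
          ∃ a ∈ badSet y, (P a ∧ ε = y a) ∨ (Q a ∧ ε = 1 - y a) := by
      obtain ⟨a, haB, hfa⟩ :=
        Finset.exists_mem_eq_inf' hB (fun u => if y u < 1/2 then y u else 1 - y u)
      refine ⟨(badSet y).inf' hB (fun u => if y u < 1/2 then y u else 1 - y u),
        ?_, ?_, ?_, a, haB, ?_⟩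
      · rw [Finset.lt_inf'_iff]
        intro c hc
        show (0:ℝ) < if y c < 1/2 then y c else 1 - y c
        rcases hbad c hc with h | h
        · rw [if_pos h.2]; exact h.1
        · rw [if_neg (not_lt.2 h.1.le)]; linarith [h.2]
      · intro u hu
        have h1 : (badSet y).inf' hB (fun u => if y u < 1/2 then y u else 1 - y u) ≤
            (if y u < 1/2 then y u else 1 - y u) := Finset.inf'_le _ (hPbad u hu)
        rwa [if_pos hu.2] at h1
      · intro u hu
        have h1 : (badSet y).inf' hB (fun u => if y u < 1/2 then y u else 1 - y u) ≤
            (if y u < 1/2 then y u else 1 - y u) := Finset.inf'_le _ (hQbad u hu)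
        rwa [if_neg (not_lt.2 hu.1.le)] at h1
      · rcases hbad a haB with hp | hq
        · refine Or.inl ⟨hp, ?_⟩
          rw [hfa]; exact if_pos hp.2
        · refine Or.inr ⟨hq, ?_⟩
          rw [hfa]; exact if_neg (not_lt.2 hq.1.le)
    set z : V → ℝ := fun u => if P u then y u - ε else if Q u then y u + ε else y u
      with hzdef
    have hzP : ∀ u, P u → z u = y u - ε := by
      intro u hu; simp only [hzdef]; rw [if_pos hu]
    have hzQ : ∀ u, Q u → z u = y u + ε := by
      intro u hu
      simp only [hzdef]; rw [if_neg (fun hp => hPQ u ⟨hp, hu⟩), if_pos hu]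
    have hzO : ∀ u, ¬ P u → ¬ Q u → z u = y u := by
      intro u h1 h2; simp only [hzdef]; rw [if_neg h1, if_neg h2]
    refine ⟨z, ⟨?_, ?_⟩, ?_, ?_⟩
    · intro u
      by_cases hp : P u
      · rw [hzP u hp]
        constructor
        · linarith [hεP u hp]
        · linarith [(hbdd u).2, hεpos]
      · by_cases hq : Q u
        · rw [hzQ u hq]
          constructor
          · linarith [(hbdd u).1, hεpos]
          · linarith [hεQ u hq]
        · rw [hzO u hp hq]; exact hbdd u
    · intro a' c hadj
      have hsum := hedge a' c hadj
      by_cases hpa : P a' <;> by_cases hpc : P c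
      · exfalso; have := hpa.2; have := hpc.2; linarith
      · by_cases hqc : Q c
        · rw [hzP a' hpa, hzQ c hqc]; linarith
        · have hc1 : 1 ≤ y c := by
            have h2 : 1/2 < y c := by
              have := hpa.2; by_contra hlt; push_neg at hlt
              have h0c : 0 < y c := by linarith
              exact hpc ⟨h0c, by linarith⟩
            by_contra hlt; push_neg at hlt
            exact hqc ⟨h2, hlt⟩
          rw [hzP a' hpa, hzO c hpc hqc]
          linarith [hεP a' hpa]
      · by_cases hqa : Q a'
        · rw [hzQ a' hqa, hzP c hpc]; linarith
        · have ha1 : 1 ≤ y a' := by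
            have h2 : 1/2 < y a' := by
              have := hpc.2; by_contra hlt; push_neg at hlt
              have h0a : 0 < y a' := by linarith
              exact hpa ⟨h0a, by linarith⟩
            by_contra hlt; push_neg at hlt
            exact hqa ⟨h2, hlt⟩
          rw [hzO a' hpa hqa, hzP c hpc]
          linarith [hεP c hpc]
      · have hza : y a' ≤ z a' := by
          by_cases hqa : Q a'
          · rw [hzQ a' hqa]; linarith
          · rw [hzO a' hpa hqa]
        have hzc : y c ≤ z c := by
          by_cases hqc : Q c
          · rw [hzQ c hqc]; linarith
          · rw [hzO c hpc hqc]
        linarith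
    · have key : ∀ u, w u * z u =
          w u * y u + ((if P u then -(w u * ε) else 0) + (if Q u then w u * ε else 0)) := by
        intro u
        by_cases hp : P u
        · rw [hzP u hp, if_pos hp, if_neg (fun hq => hPQ u ⟨hp, hq⟩)]; ring
        · by_cases hq : Q u
          · rw [hzQ u hq, if_neg hp, if_pos hq]; ring
          · rw [hzO u hp hq, if_neg hp, if_neg hq]; ring
      have e1 : (∑ u, (if P u then -(w u * ε) else 0)) =
          -((∑ u, (if P u then w u else 0)) * ε) := by
        rw [Finset.sum_mul, ← Finset.sum_neg_distrib]
        refine Finset.sum_congr rfl fun u _ => ?_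
        by_cases hp : P u
        · rw [if_pos hp, if_pos hp]
        · rw [if_neg hp, if_neg hp]; ring
      have e2 : (∑ u, (if Q u then w u * ε else 0)) =
          (∑ u, (if Q u then w u else 0)) * ε := by
        rw [Finset.sum_mul]
        refine Finset.sum_congr rfl fun u _ => ?_
        by_cases hq : Q u
        · rw [if_pos hq, if_pos hq]
        · rw [if_neg hq, if_neg hq]; ring
      calc ∑ u, w u * z u
          = ∑ u, (w u * y u +
              ((if P u then -(w u * ε) else 0) + (if Q u then w u * ε else 0))) :=
            Finset.sum_congr rfl fun u _ => key u
        _ = ∑ u, w u * y u + ((∑ u, (if P u then -(w u * ε) else 0)) +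
              (∑ u, (if Q u then w u * ε else 0))) := by
            rw [Finset.sum_add_distrib, Finset.sum_add_distrib]
        _ = ∑ u, w u * y u + (-((∑ u, (if P u then w u else 0)) * ε) +
              (∑ u, (if Q u then w u else 0)) * ε) := by rw [e1, e2]
        _ ≤ ∑ u, w u * y u := by nlinarith [hεpos, hcmp]
    · have hsub : badSet z ⊆ badSet y := by
        intro u hu
        by_contra h
        have h1 : ¬ P u := fun hp => h (hPbad u hp)
        have h2 : ¬ Q u := fun hq => h (hQbad u hq)
        rw [mem_badSet, hzO u h1 h2] at hu
        exact h (mem_badSet.2 hu)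
      have hanot : a ∉ badSet z := by
        rcases hattain with ⟨hp, hεeq⟩ | ⟨hq, hεeq⟩
        · have hz0 : z a = 0 := by rw [hzP a hp, hεeq]; ring
          rw [mem_badSet]; push_neg; intro h; exact absurd hz0 h
        · have hz1 : z a = 1 := by rw [hzQ a hq, hεeq]; ring
          rw [mem_badSet]; push_neg
          intro _ _; exact hz1
      exact (Finset.ssubset_iff_of_subset hsub).2 ⟨a, haB, hanot⟩
  · -- move towards 1/2 (up on P, down on Q)
    obtain ⟨ε, hεpos, hεP, hεQ, a, haB, hattain⟩ :
        ∃ ε : ℝ, 0 < ε ∧ (∀ u, P u → ε ≤ 1/2 - y u) ∧ (∀ u, Q u → ε ≤ y u - 1/2) ∧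
          ∃ a ∈ badSet y, (P a ∧ ε = 1/2 - y a) ∨ (Q a ∧ ε = y a - 1/2) := by
      obtain ⟨a, haB, hfa⟩ :=
        Finset.exists_mem_eq_inf' hB (fun u => if y u < 1/2 then 1/2 - y u else y u - 1/2)
      refine ⟨(badSet y).inf' hB (fun u => if y u < 1/2 then 1/2 - y u else y u - 1/2),
        ?_, ?_, ?_, a, haB, ?_⟩
      · rw [Finset.lt_inf'_iff]
        intro c hc
        show (0:ℝ) < if y c < 1/2 then 1/2 - y c else y c - 1/2
        rcases hbad c hc with h | h
        · rw [if_pos h.2]; linarith [h.2]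
        · rw [if_neg (not_lt.2 h.1.le)]; linarith [h.1]
      · intro u hu
        have h1 : (badSet y).inf' hB (fun u => if y u < 1/2 then 1/2 - y u else y u - 1/2) ≤
            (if y u < 1/2 then 1/2 - y u else y u - 1/2) := Finset.inf'_le _ (hPbad u hu)
        rwa [if_pos hu.2] at h1
      · intro u hu
        have h1 : (badSet y).inf' hB (fun u => if y u < 1/2 then 1/2 - y u else y u - 1/2) ≤
            (if y u < 1/2 then 1/2 - y u else y u - 1/2) := Finset.inf'_le _ (hQbad u hu)
        rwa [if_neg (not_lt.2 hu.1.le)] at h1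
      · rcases hbad a haB with hp | hq
        · refine Or.inl ⟨hp, ?_⟩
          rw [hfa]; exact if_pos hp.2
        · refine Or.inr ⟨hq, ?_⟩
          rw [hfa]; exact if_neg (not_lt.2 hq.1.le)
    set z : V → ℝ := fun u => if P u then y u + ε else if Q u then y u - ε else y u
      with hzdef
    have hzP : ∀ u, P u → z u = y u + ε := by
      intro u hu; simp only [hzdef]; rw [if_pos hu]
    have hzQ : ∀ u, Q u → z u = y u - ε := by
      intro u hu
      simp only [hzdef]; rw [if_neg (fun hp => hPQ u ⟨hp, hu⟩), if_pos hu]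
    have hzO : ∀ u, ¬ P u → ¬ Q u → z u = y u := by
      intro u h1 h2; simp only [hzdef]; rw [if_neg h1, if_neg h2]
    refine ⟨z, ⟨?_, ?_⟩, ?_, ?_⟩
    · intro u
      by_cases hp : P u
      · rw [hzP u hp]
        constructor
        · linarith [hp.1, hεpos]
        · linarith [hεP u hp]
      · by_cases hq : Q u
        · rw [hzQ u hq]
          constructor
          · linarith [hεQ u hq]
          · linarith [hq.2, hεpos]
        · rw [hzO u hp hq]; exact hbdd u
    · intro a' c hadj
      have hsum := hedge a' c hadj
      by_cases hqa : Q a' <;> by_cases hqc : Q c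
      · rw [hzQ a' hqa, hzQ c hqc]
        linarith [hεQ a' hqa, hεQ c hqc]
      · by_cases hpc : P c
        · rw [hzQ a' hqa, hzP c hpc]; linarith
        · have hc1 : 1/2 ≤ y c := by
            have h0 : 0 < y c := by linarith [hqa.2]
            by_contra hlt; push_neg at hlt
            exact hpc ⟨h0, hlt⟩
          rw [hzQ a' hqa, hzO c hpc hqc]
          linarith [hεQ a' hqa]
      · by_cases hpa : P a'
        · rw [hzP a' hpa, hzQ c hqc]; linarith
        · have ha1 : 1/2 ≤ y a' := by
            have h0 : 0 < y a' := by linarith [hqc.2]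
            by_contra hlt; push_neg at hlt
            exact hpa ⟨h0, hlt⟩
          rw [hzO a' hpa hqa, hzQ c hqc]
          linarith [hεQ c hqc]
      · have hza : y a' ≤ z a' := by
          by_cases hpa : P a'
          · rw [hzP a' hpa]; linarith
          · rw [hzO a' hpa hqa]
        have hzc : y c ≤ z c := by
          by_cases hpc : P c
          · rw [hzP c hpc]; linarith
          · rw [hzO c hpc hqc]
        linarith
    · have key : ∀ u, w u * z u =
          w u * y u + ((if P u then w u * ε else 0) + (if Q u then -(w u * ε) else 0)) := by
        intro u
        by_cases hp : P u
        · rw [hzP u hp, if_pos hp, if_neg (fun hq => hPQ u ⟨hp, hq⟩)]; ring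
        · by_cases hq : Q u
          · rw [hzQ u hq, if_neg hp, if_pos hq]; ring
          · rw [hzO u hp hq, if_neg hp, if_neg hq]; ring
      have e1 : (∑ u, (if P u then w u * ε else 0)) =
          (∑ u, (if P u then w u else 0)) * ε := by
        rw [Finset.sum_mul]
        refine Finset.sum_congr rfl fun u _ => ?_
        by_cases hp : P u
        · rw [if_pos hp, if_pos hp]
        · rw [if_neg hp, if_neg hp]; ring
      have e2 : (∑ u, (if Q u then -(w u * ε) else 0)) =
          -((∑ u, (if Q u then w u else 0)) * ε) := by
        rw [Finset.sum_mul, ← Finset.sum_neg_distrib]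
        refine Finset.sum_congr rfl fun u _ => ?_
        by_cases hq : Q u
        · rw [if_pos hq, if_pos hq]
        · rw [if_neg hq, if_neg hq]; ring
      calc ∑ u, w u * z u
          = ∑ u, (w u * y u +
              ((if P u then w u * ε else 0) + (if Q u then -(w u * ε) else 0))) :=
            Finset.sum_congr rfl fun u _ => key u
        _ = ∑ u, w u * y u + ((∑ u, (if P u then w u * ε else 0)) +
              (∑ u, (if Q u then -(w u * ε) else 0))) := by
            rw [Finset.sum_add_distrib, Finset.sum_add_distrib]
        _ = ∑ u, w u * y u + (((∑ u, (if P u then w u else 0)) * ε) +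
              -((∑ u, (if Q u then w u else 0)) * ε)) := by rw [e1, e2]
        _ ≤ ∑ u, w u * y u := by nlinarith [hεpos, hcmp]
    · have hsub : badSet z ⊆ badSet y := by
        intro u hu
        by_contra h
        have h1 : ¬ P u := fun hp => h (hPbad u hp)
        have h2 : ¬ Q u := fun hq => h (hQbad u hq)
        rw [mem_badSet, hzO u h1 h2] at hu
        exact h (mem_badSet.2 hu)
      have hanot : a ∉ badSet z := by
        rcases hattain with ⟨hp, hεeq⟩ | ⟨hq, hεeq⟩
        · have hzh : z a = 1/2 := by rw [hzP a hp, hεeq]; ring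
          rw [mem_badSet]; push_neg
          intro _ h2; exact absurd hzh h2
        · have hzh : z a = 1/2 := by rw [hzQ a hq, hεeq]; ring
          rw [mem_badSet]; push_neg
          intro _ h2; exact absurd hzh h2
      exact (Finset.ssubset_iff_of_subset hsub).2 ⟨a, haB, hanot⟩

/-- Any feasible point is dominated in nonnegative-weighted value by a half-integral
feasible point. -/
lemma exists_halfIntegral_le {G : SimpleGraph V} {w : V → ℝ} (hw : ∀ u, 0 ≤ w u) :
    ∀ y : V → ℝ, LPFeasible G y →
      ∃ z : V → ℝ, LPFeasible G z ∧ HalfIntegral z ∧ ∑ u, w u * z u ≤ ∑ u, w u * y u := by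
  classical
  suffices h : ∀ n : ℕ, ∀ y : V → ℝ, LPFeasible G y → (badSet y).card ≤ n →
      ∃ z : V → ℝ, LPFeasible G z ∧ HalfIntegral z ∧ ∑ u, w u * z u ≤ ∑ u, w u * y u by
    intro y hy
    exact h (badSet y).card y hy le_rfl
  intro n
  induction n with
  | zero =>
    intro y hy hc
    have : badSet y = ∅ := Finset.card_eq_zero.1 (Nat.le_zero.1 hc)
    exact ⟨y, hy, halfIntegral_of_badSet_empty this, le_rfl⟩
  | succ n ih =>
    intro y hy hc
    by_cases hB : (badSet y).Nonempty
    · obtain ⟨z₁, hz₁f, hz₁le, hz₁sub⟩ := nt_step hw hy hB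
      have hlt : (badSet z₁).card ≤ n := by
        have := Finset.card_lt_card hz₁sub
        omega
      obtain ⟨z, hzf, hzH, hzle⟩ := ih z₁ hz₁f hlt
      exact ⟨z, hzf, hzH, hzle.trans hz₁le⟩
    · rw [Finset.not_nonempty_iff_eq_empty] at hB
      exact ⟨y, hy, halfIntegral_of_badSet_empty hB, le_rfl⟩

lemma exists_int_two_mul {a : V → ℝ} (ha : HalfIntegral a) :
    ∃ k : ℤ, (k : ℝ) = 2 * LPValue a := by
  have h : ∀ u, ∃ m : ℤ, (m : ℝ) = 2 * a u := by
    intro u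
    rcases ha u with h | h | h
    · exact ⟨0, by rw [h]; norm_num⟩
    · exact ⟨1, by rw [h]; norm_num⟩
    · exact ⟨2, by rw [h]; norm_num⟩
  choose m hm using h
  refine ⟨∑ u, m u, ?_⟩
  rw [LPValue, Finset.mul_sum]
  push_cast
  exact Finset.sum_congr rfl fun u _ => hm u

lemma half_gap {a b : V → ℝ} (ha : HalfIntegral a) (hb : HalfIntegral b)
    (h : LPValue b < LPValue a) : LPValue b + 1/2 ≤ LPValue a := by
  obtain ⟨k, hk⟩ := exists_int_two_mul ha
  obtain ⟨m, hm⟩ := exists_int_two_mul hb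
  have hmk : m < k := by exact_mod_cast (by linarith : (m : ℝ) < k)
  have : (m : ℝ) + 1 ≤ k := by exact_mod_cast hmk
  linarith

end Aux

/-- LP content of Lemma 13: both children obtained by branching on a variable that is
fractional in every optimal solution have value at least OPT + 1/2. -/
theorem branch_bound_half {V : Type*} [Fintype V] (G : SimpleGraph V)
    (OPT : ℝ) (hOPT : IsLeast {r : ℝ | ∃ x : V → ℝ, LPFeasible G x ∧ LPValue x = r} OPT)
    (v : V) (hv : ∀ x : V → ℝ, LPOptimal G x → 0 < x v ∧ x v < 1) :
    ∀ b : ℝ, b = 0 ∨ b = 1 → ∀ x : V → ℝ, LPFeasible G x → x v = b →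
      OPT + 1/2 ≤ LPValue x := by
  classical
  obtain ⟨⟨xs, hxsf, hxsv⟩, hlb⟩ := hOPT
  have hlb' : ∀ y : V → ℝ, LPFeasible G y → OPT ≤ LPValue y := fun y hy =>
    hlb ⟨y, hy, rfl⟩
  -- a half-integral optimum
  obtain ⟨xh, hxhf, hxhH, hxhle⟩ :=
    exists_halfIntegral_le (w := fun _ => (1 : ℝ)) (fun _ => zero_le_one) xs hxsf
  have hone : ∀ y : V → ℝ, (∑ u, (1 : ℝ) * y u) = LPValue y := by
    intro y; rw [LPValue]; exact Finset.sum_congr rfl fun u _ => one_mul _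
  have hxhval : LPValue xh = OPT := by
    have h1 : LPValue xh ≤ LPValue xs := by
      rw [← hone xh, ← hone xs]; exact hxhle
    have h2 : OPT ≤ LPValue xh := hlb' xh hxhf
    have h3 : LPValue xh ≤ OPT := hxsv ▸ h1
    linarith
  -- the gap fact: a half-integral feasible point with integral value at v costs ≥ OPT + 1/2
  have hgap : ∀ y : V → ℝ, LPFeasible G y → HalfIntegral y →
      (y v = 0 ∨ y v = 1) → OPT + 1/2 ≤ LPValue y := by
    intro y hyf hyH hyv
    have hne : LPValue y ≠ OPT := by
      intro he
      have hopt : LPOptimal G y := ⟨hyf, fun z hz => he ▸ hlb' z hz⟩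
      rcases hyv with h | h
      · exact absurd ((hv y hopt).1) (by rw [h]; exact lt_irrefl 0)
      · exact absurd ((hv y hopt).2) (by rw [h]; exact lt_irrefl 1)
    have hlt : LPValue xh < LPValue y :=
      lt_of_le_of_ne (hxhval ▸ hlb' y hyf) (fun he => hne (he ▸ hxhval))
    have := half_gap hyH hxhH hlt
    linarith [hxhval ▸ this]
  intro b hb x hx hxv
  rcases hb with rfl | rfl
  · -- b = 0 : use weights 1 + indicator of v
    have hw : ∀ u, 0 ≤ (fun u => if u = v then (2:ℝ) else 1) u := by
      intro u; dsimp only; split_ifs <;> norm_num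
    obtain ⟨yh, hyf, hyH, hyle⟩ := exists_halfIntegral_le (G := G) hw x hx
    have hsum : ∀ t : V → ℝ,
        ∑ u, (fun u => if u = v then (2:ℝ) else 1) u * t u = LPValue t + t v := by
      intro t
      have hpt : ∀ u, (fun u => if u = v then (2:ℝ) else 1) u * t u =
          t u + (if u = v then t u else 0) := by
        intro u; dsimp only
        by_cases h : u = v
        · rw [if_pos h, if_pos h]; ring
        · rw [if_neg h, if_neg h]; ring
      rw [Finset.sum_congr rfl fun u _ => hpt u, Finset.sum_add_distrib, LPValue]
      congr 1
      simp
    have hkey : LPValue yh + yh v ≤ LPValue x := by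
      have h := hyle
      rw [hsum yh, hsum x, hxv] at h
      linarith
    rcases hyH v with h | h | h
    · have := hgap yh hyf hyH (Or.inl h)
      rw [h] at hkey
      linarith
    · have := hlb' yh hyf
      rw [h] at hkey
      linarith
    · have := hlb' yh hyf
      rw [h] at hkey
      linarith
  · -- b = 1 : use weights 1 - indicator of v
    have hw : ∀ u, 0 ≤ (fun u => if u = v then (0:ℝ) else 1) u := by
      intro u; dsimp only; split_ifs <;> norm_num
    obtain ⟨yh, hyf, hyH, hyle⟩ := exists_halfIntegral_le (G := G) hw x hx
    have hsum : ∀ t : V → ℝ,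
        ∑ u, (fun u => if u = v then (0:ℝ) else 1) u * t u = LPValue t - t v := by
      intro t
      have hpt : ∀ u, (fun u => if u = v then (0:ℝ) else 1) u * t u =
          t u - (if u = v then t u else 0) := by
        intro u; dsimp only
        by_cases h : u = v
        · rw [if_pos h, if_pos h]; ring
        · rw [if_neg h, if_neg h]; ring
      rw [Finset.sum_congr rfl fun u _ => hpt u, Finset.sum_sub_distrib, LPValue]
      congr 1
      simp
    have hkey : LPValue yh - yh v ≤ LPValue x - 1 := by
      have h := hyle
      rw [hsum yh, hsum x, hxv] at h
      linarith
    rcases hyH v with h | h | h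
    · have := hlb' yh hyf
      rw [h] at hkey
      linarith
    · have := hlb' yh hyf
      rw [h] at hkey
      linarith
    · have := hgap yh hyf hyH (Or.inr h)
      rw [h] at hkey
      linarith
end

section
/- Let G = (V, E) be a finite simple graph and let K = {x : V → ℝ | ∀ v ∈ V, 0 ≤ x_v ≤ 1, and ∀ uv ∈ E, x_u + x_v ≥ 1} be the feasible region of the vertex-cover LP. Then every extreme point x of K is half-integral: x_v ∈ {0, 1/2, 1} for all v ∈ V. -/
/-!
Let `d` move every coordinate of a feasible `x` that is not in `{0, 1/2, 1}` away from `1/2` at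
unit speed, and keep the others fixed. Moved coordinates lie strictly inside `[0, 1]`, and on a tight
edge `x u + x w = 1` the two coordinates are reflections of each other through `1/2`, so they move
in opposite directions and the edge stays tight. Hence `x + t • d` is feasible for all small `t`
of either sign, and at an extreme point this forces `d = 0`.
-/

open Filter Topology

theorem eq_zero_of_mem_extremePoints_of_add_mem_of_sub_mem {𝕜 E : Type*} [Ring 𝕜] [LinearOrder 𝕜]
    [IsStrictOrderedRing 𝕜] [Invertible (2 : 𝕜)] [AddCommGroup E] [Module 𝕜 E] {A : Set E}
    {x y : E} (hx : x ∈ A.extremePoints 𝕜) (h₁ : x + y ∈ A) (h₂ : x - y ∈ A) : y = 0 :=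
  add_eq_left.mp (hx.2 h₁ h₂ (mem_openSegment_add_sub x y))

theorem eq_zero_of_mem_extremePoints_of_eventually_add_smul_mem {E : Type*} [AddCommGroup E]
    [Module ℝ E] {A : Set E} {x d : E} (hx : x ∈ A.extremePoints ℝ)
    (h : ∀ᶠ t : ℝ in 𝓝 0, x + t • d ∈ A) : d = 0 := by
  obtain ⟨ε, hε, hA⟩ := Metric.eventually_nhds_iff.mp h
  have hhalf : ∀ s : ℝ, |s| = ε / 2 → x + s • d ∈ A := fun s hs =>
    hA (by rw [Real.dist_0_eq_abs, hs]; exact half_lt_self hε)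
  have hplus : x + (ε / 2) • d ∈ A := hhalf _ (abs_of_pos (half_pos hε))
  have hminus : x - (ε / 2) • d ∈ A := by
    simpa [sub_eq_add_neg] using hhalf (-(ε / 2)) (by rw [abs_neg, abs_of_pos (half_pos hε)])
  have hzero := eq_zero_of_mem_extremePoints_of_add_mem_of_sub_mem hx hplus hminus
  exact (smul_eq_zero.mp hzero).resolve_left (half_pos hε).ne'

noncomputable def awayFromHalf (a : ℝ) : ℝ :=
  if a = 0 ∨ a = 1 then 0 else Real.sign (a - 1 / 2)

theorem awayFromHalf_eq_zero_iff (a : ℝ) : awayFromHalf a = 0 ↔ a = 0 ∨ a = 1 / 2 ∨ a = 1 := by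
  unfold awayFromHalf
  split_ifs with h
  · tauto
  · rw [Real.sign_eq_zero_iff, sub_eq_zero]
    tauto

theorem awayFromHalf_one_sub (a : ℝ) : awayFromHalf (1 - a) = -awayFromHalf a := by
  have hreflect : 1 - a - 1 / 2 = -(a - 1 / 2) := by ring
  simp only [awayFromHalf, sub_eq_zero, eq_comm (a := (1 : ℝ)), sub_eq_self, hreflect,
    Real.sign_neg, or_comm (a := a = 1)]
  split_ifs <;> simp

theorem eventually_add_mul_awayFromHalf_mem_Icc {a : ℝ} (ha : a ∈ Set.Icc 0 1) :
    ∀ᶠ t in 𝓝 (0 : ℝ), a + t * awayFromHalf a ∈ Set.Icc 0 1 := by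
  by_cases hd : awayFromHalf a = 0
  · simp [hd, ha]
  have hinterior : a ∈ Set.Ioo 0 1 := by
    rw [awayFromHalf_eq_zero_iff] at hd
    exact ⟨ha.1.lt_of_ne (by tauto), ha.2.lt_of_ne (by tauto)⟩
  have hlim : Tendsto (fun t => a + t * awayFromHalf a) (𝓝 0) (𝓝 a) := by
    exact Continuous.tendsto' (by fun_prop) _ _ (by simp)
  exact (hlim.eventually (Ioo_mem_nhds hinterior.1 hinterior.2)).mono
    fun _ ht => Set.Ioo_subset_Icc_self ht

theorem eventually_one_le_add_mul_awayFromHalf {a b : ℝ} (hab : 1 ≤ a + b) :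
    ∀ᶠ t in 𝓝 (0 : ℝ), 1 ≤ (a + t * awayFromHalf a) + (b + t * awayFromHalf b) := by
  rcases hab.eq_or_lt with htight | hslack
  · obtain rfl : b = 1 - a := by linarith
    refine Eventually.of_forall fun t => ?_
    rw [awayFromHalf_one_sub]
    linarith
  · have hlim : Tendsto (fun t => (a + t * awayFromHalf a) + (b + t * awayFromHalf b)) (𝓝 0)
        (𝓝 (a + b)) := by
      exact Continuous.tendsto' (by fun_prop) _ _ (by simp)
    exact (hlim.eventually_const_lt hslack).mono fun _ ht => ht.le

theorem LPFeasible.eventually_add_smul_awayFromHalf {V : Type*} [Fintype V] {G : SimpleGraph V}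
    {x : V → ℝ} (hx : LPFeasible G x) :
    ∀ᶠ t in 𝓝 (0 : ℝ), LPFeasible G (x + t • fun u => awayFromHalf (x u)) := by
  simp only [LPFeasible, Pi.add_apply, Pi.smul_apply, smul_eq_mul]
  refine (eventually_all.2 fun v => ?_).and
    (eventually_all.2 fun u => eventually_all.2 fun w => eventually_imp_distrib_left.2 fun h => ?_)
  · exact eventually_add_mul_awayFromHalf_mem_Icc (hx.1 v)
  · exact eventually_one_le_add_mul_awayFromHalf (hx.2 u w h)

/-- Every extreme point of the vertex-cover LP is half-integral. -/
theorem extreme_points_half_integral {V : Type*} [Fintype V] (G : SimpleGraph V) :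
    ∀ x ∈ Set.extremePoints ℝ {x : V → ℝ | LPFeasible G x},
      ∀ v, x v = 0 ∨ x v = 1/2 ∨ x v = 1 := by
  intro x hx v
  have hd := eq_zero_of_mem_extremePoints_of_eventually_add_smul_mem hx
    (LPFeasible.eventually_add_smul_awayFromHalf hx.1)
  exact (awayFromHalf_eq_zero_iff (x v)).mp (congrFun hd v)
end

section
/- Let t, d be natural numbers and let G be the disjoint union of t triangles and d diamonds: the vertex set is (Fin t × Fin 3) ⊕ (Fin d × Fin 4); two triangle-vertices (i, j), (i', j') are adjacent iff i = i' and j ≠ j'; two diamond-vertices (i, p), (i', q) are adjacent iff i = i', p ≠ q, and {p, q} ≠ {1, 3}; no triangle-vertex is adjacent to a diamond-vertex. Then the minimum cardinality of a vertex cover of G equals 2t + 2d, and the minimal LP value of the vertex-cover LP of G equals (3/2)·t + 2d. (In particular, for t = m triangles and d = m/2 diamonds, the IP optimum is 3m, the LP optimum is (5/2)·m, and the additive integrality gap is m/2 — the instance of Theorem 8.) -/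
/-- Adjacency for the disjoint union of t triangles and d diamonds. -/
def triDiaAdj (t d : ℕ) :
    ((Fin t × Fin 3) ⊕ (Fin d × Fin 4)) → ((Fin t × Fin 3) ⊕ (Fin d × Fin 4)) → Prop
  | Sum.inl p, Sum.inl q => p.1 = q.1 ∧ p.2 ≠ q.2
  | Sum.inr p, Sum.inr q => p.1 = q.1 ∧ p.2 ≠ q.2 ∧
      ¬(p.2 = 1 ∧ q.2 = 3) ∧ ¬(p.2 = 3 ∧ q.2 = 1)
  | _, _ => False

/-- The disjoint union of t triangles and d diamonds. -/
def triDia (t d : ℕ) : SimpleGraph ((Fin t × Fin 3) ⊕ (Fin d × Fin 4)) where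
  Adj := triDiaAdj t d
  symm := by
    constructor
    rintro (p | p) (q | q) h
    · exact ⟨h.1.symm, h.2.symm⟩
    · exact h.elim
    · exact h.elim
    · exact ⟨h.1.symm, h.2.1.symm, fun hc => h.2.2.2 ⟨hc.2, hc.1⟩,
        fun hc => h.2.2.1 ⟨hc.2, hc.1⟩⟩
  loopless := by
    constructor
    rintro (p | p) h
    · exact h.2 rfl
    · exact h.2.1 rfl

open Finset

lemma adjL {t d : ℕ} (i : Fin t) {a b : Fin 3} (h : a ≠ b) :
    (triDia t d).Adj (Sum.inl (i,a)) (Sum.inl (i,b)) := ⟨rfl, h⟩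

lemma adjR {t d : ℕ} (i : Fin d) {a b : Fin 4} (h1 : a ≠ b)
    (h2 : ¬(a = 1 ∧ b = 3)) (h3 : ¬(a = 3 ∧ b = 1)) :
    (triDia t d).Adj (Sum.inr (i,a)) (Sum.inr (i,b)) := ⟨rfl, h1, h2, h3⟩

lemma tri_fiber {t d : ℕ} {C : Finset ((Fin t × Fin 3) ⊕ (Fin d × Fin 4))}
    (hC : IsVertexCover (triDia t d) C) (i : Fin t) :
    2 ≤ (C.filter (fun v => Sum.map Prod.fst Prod.fst v = Sum.inl i)).card := by
  have hab := hC _ _ (adjL i (by decide : (0:Fin 3) ≠ 1))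
  have hac := hC _ _ (adjL i (by decide : (0:Fin 3) ≠ 2))
  have hbc := hC _ _ (adjL i (by decide : (1:Fin 3) ≠ 2))
  refine Finset.one_lt_card.mpr ?_
  rcases hab with ha | hb
  · rcases hbc with hb | hc
    · exact ⟨_, mem_filter.mpr ⟨ha, rfl⟩, _, mem_filter.mpr ⟨hb, rfl⟩, by simp⟩
    · exact ⟨_, mem_filter.mpr ⟨ha, rfl⟩, _, mem_filter.mpr ⟨hc, rfl⟩, by simp⟩
  · rcases hac with ha | hc
    · exact ⟨_, mem_filter.mpr ⟨ha, rfl⟩, _, mem_filter.mpr ⟨hb, rfl⟩, by simp⟩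
    · exact ⟨_, mem_filter.mpr ⟨hb, rfl⟩, _, mem_filter.mpr ⟨hc, rfl⟩, by simp⟩

lemma dia_fiber {t d : ℕ} {C : Finset ((Fin t × Fin 3) ⊕ (Fin d × Fin 4))}
    (hC : IsVertexCover (triDia t d) C) (i : Fin d) :
    2 ≤ (C.filter (fun v => Sum.map Prod.fst Prod.fst v = Sum.inr i)).card := by
  have h01 := hC _ _ (adjR i (by decide : (0:Fin 4) ≠ 1) (by decide) (by decide))
  have h23 := hC _ _ (adjR i (by decide : (2:Fin 4) ≠ 3) (by decide) (by decide))
  refine Finset.one_lt_card.mpr ?_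
  rcases h01 with h | h <;> rcases h23 with h' | h' <;>
    exact ⟨_, mem_filter.mpr ⟨h, rfl⟩, _, mem_filter.mpr ⟨h', rfl⟩, by simp⟩

lemma tri_lp {t d : ℕ} {y : ((Fin t × Fin 3) ⊕ (Fin d × Fin 4)) → ℝ}
    (hy : LPFeasible (triDia t d) y) (i : Fin t) :
    (3/2 : ℝ) ≤ ∑ j : Fin 3, y (Sum.inl (i, j)) := by
  have hab := hy.2 _ _ (adjL i (by decide : (0:Fin 3) ≠ 1))
  have hac := hy.2 _ _ (adjL i (by decide : (0:Fin 3) ≠ 2))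
  have hbc := hy.2 _ _ (adjL i (by decide : (1:Fin 3) ≠ 2))
  rw [Fin.sum_univ_three]
  linarith

lemma dia_lp {t d : ℕ} {y : ((Fin t × Fin 3) ⊕ (Fin d × Fin 4)) → ℝ}
    (hy : LPFeasible (triDia t d) y) (i : Fin d) :
    (2 : ℝ) ≤ ∑ j : Fin 4, y (Sum.inr (i, j)) := by
  have h01 := hy.2 _ _ (adjR i (by decide : (0:Fin 4) ≠ 1) (by decide) (by decide))
  have h23 := hy.2 _ _ (adjR i (by decide : (2:Fin 4) ≠ 3) (by decide) (by decide))
  rw [Fin.sum_univ_four]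
  linarith

/-- For t triangles and d diamonds: IP optimum 2t + 2d, LP optimum (3/2)t + 2d. -/
theorem triDia_values (t d : ℕ) :
    IsLeast {n : ℕ | ∃ C : Finset ((Fin t × Fin 3) ⊕ (Fin d × Fin 4)),
        IsVertexCover (triDia t d) C ∧ C.card = n} (2 * t + 2 * d) ∧
    IsLeast {r : ℝ | ∃ x : ((Fin t × Fin 3) ⊕ (Fin d × Fin 4)) → ℝ,
        LPFeasible (triDia t d) x ∧ LPValue x = r} ((3/2) * t + 2 * d) := by
  constructor
  · constructor
    · refine ⟨(univ ×ˢ ({0,1} : Finset (Fin 3))).image Sum.inl ∪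
              (univ ×ˢ ({0,2} : Finset (Fin 4))).image Sum.inr, ?_, ?_⟩
      · rintro (⟨i,j⟩|⟨i,q⟩) (⟨i',j'⟩|⟨i',q'⟩) h
        · obtain ⟨rfl, hne⟩ := h
          fin_cases j <;> fin_cases j' <;> simp_all
        · exact h.elim
        · exact h.elim
        · obtain ⟨rfl, hne, h13, h31⟩ := h
          fin_cases q <;> fin_cases q' <;> simp_all
      · rw [card_union_of_disjoint (by simp [Finset.disjoint_left]),
          card_image_of_injective _ Sum.inl_injective,
          card_image_of_injective _ Sum.inr_injective, card_product, card_product]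
        simp [mul_comm]
    · rintro n ⟨C, hC, rfl⟩
      rw [Finset.card_eq_sum_card_fiberwise
        (f := Sum.map Prod.fst Prod.fst) (t := Finset.univ) (fun x _ => mem_univ _)]
      rw [Fintype.sum_sum_type]
      have h1 : 2 * t ≤ ∑ i : Fin t,
          (C.filter (fun v => Sum.map Prod.fst Prod.fst v = Sum.inl i)).card := by
        calc 2 * t = ∑ _i : Fin t, 2 := by simp [mul_comm]
        _ ≤ _ := Finset.sum_le_sum (fun i _ => tri_fiber hC i)
      have h2 : 2 * d ≤ ∑ i : Fin d,
          (C.filter (fun v => Sum.map Prod.fst Prod.fst v = Sum.inr i)).card := by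
        calc 2 * d = ∑ _i : Fin d, 2 := by simp [mul_comm]
        _ ≤ _ := Finset.sum_le_sum (fun i _ => dia_fiber hC i)
      omega
  · constructor
    · refine ⟨fun _ => (1/2 : ℝ), ⟨fun v => by norm_num, fun u v _ => by norm_num⟩, ?_⟩
      rw [LPValue, Finset.sum_const, card_univ]
      simp only [Fintype.card_sum, Fintype.card_prod, Fintype.card_fin]
      ring
    · rintro r ⟨y, hy, rfl⟩
      rw [LPValue, Fintype.sum_sum_type]
      have h1 : (3/2 : ℝ) * t ≤ ∑ p : Fin t × Fin 3, y (Sum.inl p) := by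
        rw [Fintype.sum_prod_type]
        calc (3/2 : ℝ) * t = ∑ _i : Fin t, (3/2 : ℝ) := by simp [mul_comm]
        _ ≤ _ := Finset.sum_le_sum (fun i _ => tri_lp hy i)
      have h2 : (2 : ℝ) * d ≤ ∑ p : Fin d × Fin 4, y (Sum.inr p) := by
        rw [Fintype.sum_prod_type]
        calc (2 : ℝ) * d = ∑ _i : Fin d, (2 : ℝ) := by simp [mul_comm]
        _ ≤ _ := Finset.sum_le_sum (fun i _ => dia_lp hy i)
      linarith
end

section
/- Let n be a natural number and let V be a finite set of points x : Fin n → ℝ with 0 ≤ x_i ≤ 1 for all i. For x ∈ V define φ(x) : Fin n → ℝ by φ(x)_i = 1 if x_i ∈ {0, 1} and φ(x)_i = 0 otherwise, and let Q be the convex hull (over ℝ) of the finite set {(x, φ(x)) : x ∈ V} ⊆ (Fin n → ℝ) × (Fin n → ℝ). Then for every point (x, y) ∈ Q and every index j, if y_j = 0 then 0 < x_j < 1. (Key property of the BDG extended formulation used in Proposition 9: the branch with y_j = 0 and x_j ∈ {0,1} is empty.) -/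
/-- The indicator of integrality used in the BDG extended formulation. -/
noncomputable def bdgPhi {n : ℕ} (x : Fin n → ℝ) : Fin n → ℝ :=
  fun i => if x i = 0 ∨ x i = 1 then 1 else 0

/-- Key property of the BDG extended formulation: in the convex hull Q of the lifted
points, y_j = 0 forces 0 < x_j < 1. -/
theorem bdg_y_zero {n : ℕ} (V : Finset (Fin n → ℝ))
    (hV : ∀ x ∈ V, ∀ i, 0 ≤ x i ∧ x i ≤ 1) :
    ∀ p ∈ convexHull ℝ
        {q : (Fin n → ℝ) × (Fin n → ℝ) | ∃ x ∈ V, q = (x, bdgPhi x)},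
      ∀ j : Fin n, p.2 j = 0 → 0 < p.1 j ∧ p.1 j < 1 := by
  intro p hp j hpj
  set S : Finset ((Fin n → ℝ) × (Fin n → ℝ)) := V.image (fun x => (x, bdgPhi x)) with hS
  have hset : {q : (Fin n → ℝ) × (Fin n → ℝ) | ∃ x ∈ V, q = (x, bdgPhi x)} = ↑S := by
    ext q
    simp only [hS, Finset.coe_image, Set.mem_image, Set.mem_setOf_eq, Finset.mem_coe]
    constructor
    · rintro ⟨x, hx, rfl⟩; exact ⟨x, hx, rfl⟩
    · rintro ⟨x, hx, rfl⟩; exact ⟨x, hx, rfl⟩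
  rw [hset, Finset.convexHull_eq] at hp
  obtain ⟨w, hw0, hw1, hwc⟩ := hp
  have hcm := hwc
  rw [Finset.centerMass_eq_of_sum_1 _ _ hw1] at hcm
  -- coordinates
  have hmem : ∀ q ∈ S, q.1 ∈ V ∧ q.2 = bdgPhi q.1 := by
    intro q hq
    simp only [hS, Finset.mem_image] at hq
    obtain ⟨x, hx, rfl⟩ := hq
    exact ⟨hx, rfl⟩
  have h2 : p.2 j = ∑ q ∈ S, w q * q.2 j := by
    rw [← hcm]; simp [Prod.snd_sum, Finset.sum_apply, Prod.smul_snd, smul_eq_mul]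
  have h1 : p.1 j = ∑ q ∈ S, w q * q.1 j := by
    rw [← hcm]; simp [Prod.fst_sum, Finset.sum_apply, Prod.smul_fst, smul_eq_mul]
  -- each term of the y-sum is nonneg
  have hy_nonneg : ∀ q ∈ S, 0 ≤ w q * q.2 j := by
    intro q hq
    have := (hmem q hq).2
    have : q.2 j = if q.1 j = 0 ∨ q.1 j = 1 then 1 else 0 := by rw [this]; rfl
    rw [this]
    split <;> simp [hw0 q hq]
  have hterm0 : ∀ q ∈ S, w q * q.2 j = 0 := by
    intro q hq
    have := (Finset.sum_eq_zero_iff_of_nonneg hy_nonneg).mp (by rw [← h2, hpj])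
    exact this q hq
  -- positive-weight points have 0 < x_j < 1
  have hkey : ∀ q ∈ S, 0 < w q → 0 < q.1 j ∧ q.1 j < 1 := by
    intro q hq hwq
    have hq2 : q.2 j = 0 := by
      have := hterm0 q hq
      exact (mul_eq_zero.mp this).resolve_left (ne_of_gt hwq)
    have hphi : q.2 j = if q.1 j = 0 ∨ q.1 j = 1 then 1 else 0 := by
      rw [(hmem q hq).2]; rfl
    rw [hphi] at hq2
    by_cases hcase : q.1 j = 0 ∨ q.1 j = 1
    · simp [hcase] at hq2
    · push_neg at hcase
      have hb := hV q.1 (hmem q hq).1 j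
      exact ⟨lt_of_le_of_ne hb.1 (Ne.symm hcase.1), lt_of_le_of_ne hb.2 hcase.2⟩
  -- there is a positive weight
  obtain ⟨q0, hq0, hwq0⟩ : ∃ q ∈ S, 0 < w q := by
    by_contra h
    push_neg at h
    have : ∑ q ∈ S, w q = 0 := Finset.sum_eq_zero (fun q hq => le_antisymm (h q hq) (hw0 q hq))
    rw [hw1] at this; norm_num at this
  have hq0key := hkey q0 hq0 hwq0
  constructor
  · rw [h1]
    have : 0 < w q0 * q0.1 j := mul_pos hwq0 hq0key.1
    refine lt_of_lt_of_le this ?_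
    refine Finset.single_le_sum (f := fun q => w q * q.1 j) ?_ hq0
    intro q hq
    rcases lt_or_eq_of_le (hw0 q hq) with h | h
    · exact le_of_lt (mul_pos h (hkey q hq h).1)
    · simp [← h]
  · rw [h1, ← hw1]
    refine Finset.sum_lt_sum (fun q hq => ?_) ⟨q0, hq0, ?_⟩
    · rcases lt_or_eq_of_le (hw0 q hq) with h | h
      · nlinarith [(hkey q hq h).2]
      · simp [← h]
    · nlinarith [hq0key.2]
end

section
/- Let n be a natural number and let V be a finite set of points x : Fin n → ℝ with 0 ≤ x_i ≤ 1 for all i. For x ∈ V define φ(x) : Fin n → ℝ by φ(x)_i = 1 if x_i ∈ {0, 1} and φ(x)_i = 0 otherwise, and let Q be the convex hull (over ℝ) of {(x, φ(x)) : x ∈ V}. Then for every point (x, y) ∈ Q with y_j = 1 for all j, the point x lies in the convex hull of the integral generators {x' ∈ V : ∀ i, x'_i = 0 ∨ x'_i = 1}. (Key property of the BDG extended formulation used in Proposition 9: the branch with y_1 = ⋯ = y_n = 1 is integral.) -/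
/-- Key property of the BDG extended formulation: on the branch y = (1,…,1), the point x
lies in the convex hull of the integral generators. -/
theorem bdg_y_one {n : ℕ} (V : Finset (Fin n → ℝ))
    (hV : ∀ x ∈ V, ∀ i, 0 ≤ x i ∧ x i ≤ 1) :
    ∀ p ∈ convexHull ℝ
        {q : (Fin n → ℝ) × (Fin n → ℝ) | ∃ x ∈ V, q = (x, bdgPhi x)},
      (∀ j : Fin n, p.2 j = 1) →
        p.1 ∈ convexHull ℝ {x' : Fin n → ℝ | x' ∈ V ∧ ∀ i, x' i = 0 ∨ x' i = 1} := by
  intro p hp hy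
  rw [convexHull_eq] at hp
  obtain ⟨ι, t, w, z, hw0, hw1, hz, hpc⟩ := hp
  choose! x hxV hxz using hz
  have hsum : p = ∑ i ∈ t, w i • z i := by
    rw [← hpc, Finset.centerMass_eq_of_sum_1 _ _ hw1]
  have hp1 : p.1 = ∑ i ∈ t, w i • x i := by
    rw [hsum, Prod.fst_sum]
    exact Finset.sum_congr rfl fun i hi => by rw [hxz i hi]; rfl
  have hp2 : ∀ j, p.2 j = ∑ i ∈ t, w i * bdgPhi (x i) j := by
    intro j
    rw [hsum, Prod.snd_sum, Finset.sum_apply]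
    exact Finset.sum_congr rfl fun i hi => by rw [hxz i hi]; rfl
  have hphile : ∀ (v : Fin n → ℝ) j, bdgPhi v j ≤ 1 := by
    intro v j; unfold bdgPhi; split <;> norm_num
  have key : ∀ i ∈ t, w i ≠ 0 → ∀ j, (x i) j = 0 ∨ (x i) j = 1 := by
    intro i hi hwi j
    have h0 : ∑ i ∈ t, w i * (1 - bdgPhi (x i) j) = 0 := by
      have := hy j
      rw [hp2 j] at this
      simp [mul_sub, Finset.sum_sub_distrib, hw1, this]
    have hnn : ∀ i ∈ t, 0 ≤ w i * (1 - bdgPhi (x i) j) := fun i hi =>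
      mul_nonneg (hw0 i hi) (by linarith [hphile (x i) j])
    have hz0 := (Finset.sum_eq_zero_iff_of_nonneg hnn).mp h0 i hi
    have hφ : bdgPhi (x i) j = 1 := by
      rcases mul_eq_zero.mp hz0 with h | h
      · exact absurd h hwi
      · linarith
    unfold bdgPhi at hφ
    by_contra hc
    push_neg at hc
    rw [if_neg (by tauto)] at hφ
    norm_num at hφ
  set t' := {i ∈ t | w i ≠ 0} with ht'
  have hmem : ∀ i ∈ t', x i ∈ {x' : Fin n → ℝ | x' ∈ V ∧ ∀ i, x' i = 0 ∨ x' i = 1} := by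
    intro i hi
    rw [ht', Finset.mem_filter] at hi
    exact ⟨hxV i hi.1, key i hi.1 hi.2⟩
  have hsumt' : ∑ i ∈ t', w i = 1 := by
    rw [ht', Finset.sum_filter_ne_zero, hw1]
  have hcm : t'.centerMass w x = p.1 := by
    rw [ht', Finset.centerMass_filter_ne_zero, Finset.centerMass_eq_of_sum_1 _ _ hw1, hp1]
  rw [← hcm]
  exact Finset.centerMass_mem_convexHull t'
    (fun i hi => hw0 i (Finset.mem_filter.mp hi).1) (by rw [hsumt']; norm_num) hmem
end
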